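/- arXiv:2408.10967 — 8 statements merged into one kernel-verified Lean document; each statement's English description precedes it below -/
import Mathlib

section
/- For nonnegative attraction values ν ∈ ℝ_{≥0}^N and revenues r₁ ≥ ... ≥ r_N ≥ 0, the revenue-ordered assortment [κ] maximizes MNL(·, ν) over all subsets of [N] if r_κ ≥ MNL([κ], ν) and r_{κ+1} < MNL([κ], ν) (with the convention r_{N+1} = −∞). -/
open Finset

/-- Expected MNL revenue of assortment `S` with revenues `r` and attraction values `ν`. -/
noncomputable def MNL (r ν : ℕ → ℝ) (S : Finset ℕ) : ℝ :=
  (∑ i ∈ S, r i * ν i) / (1 + ∑ i ∈ S, ν i)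

theorem stmt1 (N κ : ℕ) (r ν : ℕ → ℝ)
    (hκ1 : 1 ≤ κ) (hκ : κ ≤ N)
    (hr_mono : ∀ i j, 1 ≤ i → i ≤ j → j ≤ N → r j ≤ r i)
    (hr_nonneg : ∀ i ∈ Finset.Icc 1 N, 0 ≤ r i)
    (hν : ∀ i, 0 ≤ ν i)
    (hthr : MNL r ν (Finset.Icc 1 κ) ≤ r κ)
    (hnext : κ < N → r (κ + 1) < MNL r ν (Finset.Icc 1 κ)) :
    ∀ S ⊆ Finset.Icc 1 N, MNL r ν S ≤ MNL r ν (Finset.Icc 1 κ) := by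
  intro S hS
  set T := Finset.Icc 1 κ with hT
  set R := MNL r ν T with hR
  have hpos : ∀ A : Finset ℕ, (0:ℝ) < 1 + ∑ i ∈ A, ν i := by
    intro A
    have : (0:ℝ) ≤ ∑ i ∈ A, ν i := Finset.sum_nonneg fun i _ => hν i
    linarith
  -- key: Σ_T (r i - R) ν i = R
  have hkey : ∑ i ∈ T, (r i - R) * ν i = R := by
    have hd : (1 + ∑ i ∈ T, ν i) ≠ 0 := ne_of_gt (hpos T)
    have : R * (1 + ∑ i ∈ T, ν i) = ∑ i ∈ T, r i * ν i := by
      rw [hR, MNL, div_mul_cancel₀ _ hd]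
    have hsum : ∑ i ∈ T, (r i - R) * ν i
        = (∑ i ∈ T, r i * ν i) - R * ∑ i ∈ T, ν i := by
      rw [Finset.mul_sum, ← Finset.sum_sub_distrib]
      exact Finset.sum_congr rfl fun i _ => by ring
    rw [hsum]; nlinarith [this]
  -- terms nonneg on T
  have hTnn : ∀ i ∈ T, 0 ≤ (r i - R) * ν i := by
    intro i hi
    rw [hT, Finset.mem_Icc] at hi
    have : r κ ≤ r i := hr_mono i κ hi.1 hi.2 hκ
    have : R ≤ r i := le_trans hthr this
    exact mul_nonneg (by linarith) (hν i)
  -- terms nonpos outside T but in [1,N]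
  have hout : ∀ i ∈ S, i ∉ T → (r i - R) * ν i ≤ 0 := by
    intro i hi hiT
    have hiN := hS hi
    rw [Finset.mem_Icc] at hiN
    rw [hT, Finset.mem_Icc] at hiT
    push_neg at hiT
    have hik : κ + 1 ≤ i := hiT hiN.1
    have hκN : κ < N := lt_of_lt_of_le hik hiN.2
    have h1 : r i ≤ r (κ + 1) := hr_mono (κ + 1) i (by omega) hik hiN.2
    have h2 : r (κ + 1) < R := hnext hκN
    exact mul_nonpos_of_nonpos_of_nonneg (by linarith) (hν i)
  -- Σ_S (r i - R) ν i ≤ R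
  have hmain : ∑ i ∈ S, (r i - R) * ν i ≤ R := by
    calc ∑ i ∈ S, (r i - R) * ν i
        ≤ ∑ i ∈ S ∩ T, (r i - R) * ν i := by
          rw [← Finset.sum_filter_add_sum_filter_not S (· ∈ T)]
          have h1 : S.filter (· ∈ T) = S ∩ T := by
            ext x; simp [Finset.mem_filter, Finset.mem_inter]
          rw [h1]
          have h2 : ∑ i ∈ S.filter (fun i => ¬ i ∈ T), (r i - R) * ν i ≤ 0 :=
            Finset.sum_nonpos fun i hi => by
              rw [Finset.mem_filter] at hi
              exact hout i hi.1 hi.2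
          linarith
      _ ≤ ∑ i ∈ T, (r i - R) * ν i :=
          Finset.sum_le_sum_of_subset_of_nonneg (Finset.inter_subset_right)
            (fun i hi _ => hTnn i hi)
      _ = R := hkey
  -- conclude
  rw [MNL, div_le_iff₀ (hpos S)]
  have hexp : ∑ i ∈ S, (r i - R) * ν i
      = (∑ i ∈ S, r i * ν i) - R * ∑ i ∈ S, ν i := by
    rw [Finset.mul_sum, ← Finset.sum_sub_distrib]
    exact Finset.sum_congr rfl fun i _ => by ring
  nlinarith [hmain, hexp]
end

section
/- Let ν ∈ ℝ_{≥0}^N, r₁ ≥ ... ≥ r_N ≥ 0, and S ⊆ [N]. For any product i ∉ S with r_i ≥ MNL(S, ν), adding i does not decrease revenue: MNL(S ∪ {i}, ν) ≥ MNL(S, ν). -/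
open Finset

theorem stmt2 (N : ℕ) (r ν : ℕ → ℝ)
    (hr_mono : ∀ i j, 1 ≤ i → i ≤ j → j ≤ N → r j ≤ r i)
    (hr_nonneg : ∀ i ∈ Finset.Icc 1 N, 0 ≤ r i)
    (hν : ∀ i, 0 ≤ ν i)
    (S : Finset ℕ) (hS : S ⊆ Finset.Icc 1 N)
    (i : ℕ) (hi : i ∈ Finset.Icc 1 N) (hiS : i ∉ S)
    (hri : MNL r ν S ≤ r i) :
    MNL r ν S ≤ MNL r ν (insert i S) := by
  have hB : (0:ℝ) < 1 + ∑ j ∈ S, ν j := by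
    have : (0:ℝ) ≤ ∑ j ∈ S, ν j := Finset.sum_nonneg fun j _ => hν j
    linarith
  have hB' : (0:ℝ) < 1 + ∑ j ∈ insert i S, ν j := by
    rw [Finset.sum_insert hiS]
    have := hν i
    linarith
  unfold MNL at *
  rw [Finset.sum_insert hiS, Finset.sum_insert hiS]
  rw [div_le_div_iff₀ hB (by have := hν i; have := Finset.sum_nonneg (fun j _ => hν j) (s := S); linarith : (0:ℝ) < 1 + (ν i + ∑ x ∈ S, ν x))]
  rw [div_le_iff₀ hB] at hri
  have h2 : (∑ j ∈ S, r j * ν j) * ν i ≤ r i * (1 + ∑ j ∈ S, ν j) * ν i :=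
    mul_le_mul_of_nonneg_right hri (hν i)
  ring_nf
  nlinarith [hν i]
end

section
/- Let α(z) = exp(β⁰ + Σ_{m=1}^M β_m z_m) on {0,1}^M with all β_m ≤ 0. Then its concave envelope over [0,1]^M is given by the Lovász-extension formula: conc(α)(x) = min over permutations σ of [M] of [ α(w₀^σ)(1 − x_{σ(1)}) + Σ_{k=1}^M α(w_k^σ)(x_{σ(k)} − x_{σ(k+1)}) ], where w₀^σ = 0, w_k^σ = w_{k−1}^σ + e_{σ(k)}, and x_{σ(M+1)} := 0, and the minimum is attained by any permutation σ sorting x_{σ(1)} ≥ x_{σ(2)} ≥ ... ≥ x_{σ(M)}. -/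
open Finset

/-- The 0/1 point of the cube corresponding to a Boolean vector. -/
noncomputable def vertexPt {n : ℕ} (b : Fin n → Bool) : Fin n → ℝ :=
  fun i => if b i then 1 else 0

/-- The concave envelope over `[0,1]^n` of a function defined (at least) on the
vertices `{0,1}^n`, via the dual (convex-combination) description. -/
noncomputable def concEnv {n : ℕ} (f : (Fin n → ℝ) → ℝ) (x : Fin n → ℝ) : ℝ :=
  sSup { y : ℝ | ∃ l : (Fin n → Bool) → ℝ,
    (∀ b, 0 ≤ l b) ∧ (∑ b, l b = 1) ∧
    (∀ i, x i = ∑ b, l b * vertexPt b i) ∧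
    y = ∑ b, l b * f (vertexPt b) }

/-- The nested 0/1 vector `w_k^σ`: indicator of the first `k` coordinates in the
order given by the permutation `σ`. -/
noncomputable def lovVtx (M : ℕ) (σ : Equiv.Perm (Fin M)) (k : ℕ) : Fin M → ℝ :=
  fun i => if (σ.symm i).1 < k then 1 else 0

/-- The Lovász-extension expression associated with a permutation `σ`:
`α(w₀^σ)(1 − x_{σ(1)}) + ∑_{k=1}^M α(w_k^σ)(x_{σ(k)} − x_{σ(k+1)})` with `x_{σ(M+1)} = 0`. -/
noncomputable def lovExpr (M : ℕ) (α : (Fin M → ℝ) → ℝ) (σ : Equiv.Perm (Fin M))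
    (x : Fin M → ℝ) : ℝ :=
  α (lovVtx M σ 0) * (1 - (if h : 0 < M then x (σ ⟨0, h⟩) else 0)) +
    ∑ k : Fin M, α (lovVtx M σ (k.1 + 1)) *
      (x (σ k) - (if h : k.1 + 1 < M then x (σ ⟨k.1 + 1, h⟩) else 0))

lemma key_ineq (r t : ℕ → ℝ) (hr0 : ∀ j, 0 < r j) (hr1 : ∀ j, r j ≤ 1)
    (ht : ∀ k, t k = 0 ∨ t k = 1) (ht0 : t 0 = 1) (n : ℕ) :
    (∏ k ∈ Finset.range n, if t (k + 1) = 1 then r k else 1) ≤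
      ∑ k ∈ Finset.range (n + 1),
        (∏ j ∈ Finset.range k, r j) * (t k - if k = n then 0 else t (k + 1)) := by
  have hsplit : ∀ m : ℕ,
      (∑ k ∈ Finset.range (m + 1),
        (∏ j ∈ Finset.range k, r j) * (t k - if k = m then 0 else t (k + 1)))
      = (∑ k ∈ Finset.range (m + 1), (∏ j ∈ Finset.range k, r j) * (t k - t (k + 1)))
        + (∏ j ∈ Finset.range m, r j) * t (m + 1) := by
    intro m
    rw [Finset.sum_range_succ, Finset.sum_range_succ
      (f := fun k => (∏ j ∈ Finset.range k, r j) * (t k - t (k + 1)))]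
    have h1 : ∀ k ∈ Finset.range m,
        (∏ j ∈ Finset.range k, r j) * (t k - if k = m then 0 else t (k + 1))
        = (∏ j ∈ Finset.range k, r j) * (t k - t (k + 1)) := by
      intro k hk
      rw [if_neg (Nat.ne_of_lt (Finset.mem_range.mp hk))]
    rw [Finset.sum_congr rfl h1, if_pos rfl]
    ring
  induction n with
  | zero => simp [ht0]
  | succ n ih =>
    rw [hsplit] at ih ⊢
    rw [Finset.prod_range_succ, Finset.sum_range_succ, Finset.prod_range_succ]
    have hP_pos : 0 < ∏ k ∈ Finset.range n, if t (k + 1) = 1 then r k else 1 := by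
      apply Finset.prod_pos
      intro k _
      split
      · exact hr0 k
      · exact one_pos
    have hpP : (∏ j ∈ Finset.range n, r j) ≤ ∏ k ∈ Finset.range n, if t (k + 1) = 1 then r k else 1 := by
      apply Finset.prod_le_prod
      · intro k _; exact (hr0 k).le
      · intro k _; split
        · exact le_rfl
        · exact hr1 k
    rcases ht (n + 1) with h0 | h1
    · rw [h0] at ih ⊢
      norm_num at ih ⊢
      linarith [ih]
    · rw [h1, if_pos rfl]
      nlinarith [ih, hpP, hr0 n, hr1 n, hP_pos,
        mul_le_mul_of_nonneg_right hpP (sub_nonneg.mpr (hr1 n))]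

noncomputable def xev (M : ℕ) (σ : Equiv.Perm (Fin M)) (x : Fin M → ℝ) (k : ℕ) : ℝ :=
  if h : k < M then x (σ ⟨k, h⟩) else 0

noncomputable def rr (M : ℕ) (β : Fin M → ℝ) (σ : Equiv.Perm (Fin M)) (j : ℕ) : ℝ :=
  if h : j < M then Real.exp (β (σ ⟨j, h⟩)) else 1

lemma lovExpr_eq (M : ℕ) (α : (Fin M → ℝ) → ℝ) (σ : Equiv.Perm (Fin M)) (x : Fin M → ℝ) :
    lovExpr M α σ x = α (lovVtx M σ 0) * (1 - xev M σ x 0) +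
      ∑ k ∈ Finset.range M, α (lovVtx M σ (k + 1)) * (xev M σ x k - xev M σ x (k + 1)) := by
  rw [lovExpr]
  congr 1
  rw [← Fin.sum_univ_eq_sum_range
    (fun k => α (lovVtx M σ (k + 1)) * (xev M σ x k - xev M σ x (k + 1)))]
  apply Finset.sum_congr rfl
  intro k _
  have h1 : xev M σ x k.1 = x (σ k) := by
    rw [xev, dif_pos k.isLt]
  rw [h1, xev]

lemma exp_sum_eq (M : ℕ) (β0 : ℝ) (β : Fin M → ℝ) (σ : Equiv.Perm (Fin M)) (w : Fin M → ℝ) :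
    Real.exp (β0 + ∑ m, β m * w m) =
      Real.exp β0 * ∏ j ∈ Finset.range M,
        (if h : j < M then Real.exp (β (σ ⟨j, h⟩) * w (σ ⟨j, h⟩)) else 1) := by
  rw [Real.exp_add]
  congr 1
  rw [← Equiv.sum_comp σ (fun m => β m * w m), Real.exp_sum,
    ← Fin.prod_univ_eq_prod_range
      (fun j => if h : j < M then Real.exp (β (σ ⟨j, h⟩) * w (σ ⟨j, h⟩)) else 1)]
  apply Finset.prod_congr rfl
  intro j _
  rw [dif_pos j.isLt]

lemma A_lovVtx (M : ℕ) (β0 : ℝ) (β : Fin M → ℝ) (σ : Equiv.Perm (Fin M)) (k : ℕ) (hk : k ≤ M) :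
    Real.exp (β0 + ∑ m, β m * lovVtx M σ k m) =
      Real.exp β0 * ∏ j ∈ Finset.range k, rr M β σ j := by
  rw [exp_sum_eq M β0 β σ]
  congr 1
  have h1 : ∀ j ∈ Finset.range M,
      (if h : j < M then Real.exp (β (σ ⟨j, h⟩) * lovVtx M σ k (σ ⟨j, h⟩)) else 1)
      = (if j < k then rr M β σ j else 1) := by
    intro j hj
    have hjM : j < M := Finset.mem_range.mp hj
    rw [dif_pos hjM, lovVtx]
    simp only [Equiv.symm_apply_apply]
    by_cases hjk : j < k
    · rw [if_pos hjk, if_pos hjk, mul_one, rr, dif_pos hjM]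
    · rw [if_neg hjk, if_neg hjk, mul_zero, Real.exp_zero]
  rw [Finset.prod_congr rfl h1, ← Finset.prod_range_mul_prod_Ico _ hk]
  have h2 : ∀ j ∈ Finset.Ico k M, (if j < k then rr M β σ j else 1) = 1 := by
    intro j hj
    have := Finset.mem_Ico.mp hj
    rw [if_neg (by omega : ¬ j < k)]
  rw [Finset.prod_congr rfl h2, Finset.prod_const_one, mul_one]
  apply Finset.prod_congr rfl
  intro j hj
  rw [if_pos (Finset.mem_range.mp hj)]

lemma vertex_le (M : ℕ) (hM : 0 < M) (β0 : ℝ) (β : Fin M → ℝ) (hβ : ∀ m, β m ≤ 0)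
    (σ : Equiv.Perm (Fin M)) (b : Fin M → Bool) :
    Real.exp (β0 + ∑ m, β m * vertexPt b m) ≤
      lovExpr M (fun z => Real.exp (β0 + ∑ m, β m * z m)) σ (vertexPt b) := by
  set r : ℕ → ℝ := rr M β σ with hr
  set t : ℕ → ℝ := fun k => if k = 0 then 1 else xev M σ (vertexPt b) (k - 1) with htdef
  have hvc : ∀ i, vertexPt b i = 0 ∨ vertexPt b i = 1 := by
    intro i; rw [vertexPt]; by_cases h : b i
    · right; rw [if_pos h]
    · left; rw [if_neg h]
  have hr0 : ∀ j, 0 < r j := by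
    intro j; rw [hr, rr]; split
    · exact Real.exp_pos _
    · exact one_pos
  have hr1 : ∀ j, r j ≤ 1 := by
    intro j; rw [hr, rr]; split
    · exact Real.exp_le_one_iff.mpr (hβ _)
    · exact le_rfl
  have ht : ∀ k, t k = 0 ∨ t k = 1 := by
    intro k; rw [htdef]; dsimp only; split
    · right; rfl
    · rw [xev]; split
      · exact hvc _
      · left; rfl
  have ht0 : t 0 = 1 := by simp [htdef]
  have key := key_ineq r t hr0 hr1 ht ht0 M
  have hL : Real.exp (β0 + ∑ m, β m * vertexPt b m)
      = Real.exp β0 * ∏ k ∈ Finset.range M, (if t (k + 1) = 1 then r k else 1) := by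
    rw [exp_sum_eq M β0 β σ (vertexPt b)]
    congr 1
    apply Finset.prod_congr rfl
    intro j hj
    have hjM : j < M := Finset.mem_range.mp hj
    have htj : t (j + 1) = vertexPt b (σ ⟨j, hjM⟩) := by
      rw [htdef]; dsimp only
      rw [if_neg (Nat.succ_ne_zero j), Nat.add_sub_cancel, xev, dif_pos hjM]
    rw [dif_pos hjM, htj]
    rcases hvc (σ ⟨j, hjM⟩) with h | h
    · rw [h, mul_zero, Real.exp_zero, if_neg (by norm_num)]
    · rw [h, mul_one, if_pos rfl, hr, rr, dif_pos hjM]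
  have hR : lovExpr M (fun z => Real.exp (β0 + ∑ m, β m * z m)) σ (vertexPt b)
      = Real.exp β0 * ∑ k ∈ Finset.range (M + 1),
          (∏ j ∈ Finset.range k, r j) * (t k - if k = M then 0 else t (k + 1)) := by
    rw [lovExpr_eq, Finset.sum_range_succ'
      (fun k => (∏ j ∈ Finset.range k, r j) * (t k - if k = M then 0 else t (k + 1)))]
    have hA : ∀ k ≤ M, Real.exp (β0 + ∑ m, β m * lovVtx M σ k m)
        = Real.exp β0 * ∏ j ∈ Finset.range k, r j := fun k hk => A_lovVtx M β0 β σ k hk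
    have ht1 : ∀ k, t (k + 1) = xev M σ (vertexPt b) k := by
      intro k; rw [htdef]; dsimp only
      rw [if_neg (Nat.succ_ne_zero k), Nat.add_sub_cancel]
    have h0 : (∏ j ∈ Finset.range 0, r j) * (t 0 - if 0 = M then 0 else t (0 + 1))
        = 1 - xev M σ (vertexPt b) 0 := by
      rw [Finset.prod_range_zero, one_mul, ht0, if_neg (by omega : ¬ 0 = M), ht1]
    have hterm : ∀ k ∈ Finset.range M,
        (∏ j ∈ Finset.range (k + 1), r j) * (t (k + 1) - if k + 1 = M then 0 else t (k + 1 + 1))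
        = (∏ j ∈ Finset.range (k + 1), r j) * (xev M σ (vertexPt b) k - xev M σ (vertexPt b) (k + 1)) := by
      intro k hk
      rw [ht1]
      congr 2
      by_cases hkM : k + 1 = M
      · rw [if_pos hkM, xev, dif_neg (by omega)]
      · rw [if_neg hkM, ht1]
    rw [Finset.sum_congr rfl hterm, h0]
    rw [mul_add, Finset.mul_sum]
    rw [add_comm]
    congr 1
    · apply Finset.sum_congr rfl
      intro k hk
      rw [hA (k + 1) (Finset.mem_range.mp hk), mul_assoc]
    · rw [hA 0 (Nat.zero_le M), Finset.prod_range_zero, mul_one]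
  rw [hL, hR]
  exact mul_le_mul_of_nonneg_left key (Real.exp_pos β0).le

lemma lov_affine (M : ℕ) (α : (Fin M → ℝ) → ℝ) (σ : Equiv.Perm (Fin M))
    (l : (Fin M → Bool) → ℝ) (hl1 : ∑ b, l b = 1) (x : Fin M → ℝ)
    (hx : ∀ i, x i = ∑ b, l b * vertexPt b i) :
    lovExpr M α σ x = ∑ b, l b * lovExpr M α σ (vertexPt b) := by
  have hxe : ∀ k, xev M σ x k = ∑ b, l b * xev M σ (vertexPt b) k := by
    intro k
    by_cases h : k < M
    · simp only [xev, dif_pos h]; exact hx _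
    · simp only [xev, dif_neg h, mul_zero, Finset.sum_const_zero]
  simp only [lovExpr_eq]
  have rhs : ∑ b, l b * (α (lovVtx M σ 0) * (1 - xev M σ (vertexPt b) 0) +
        ∑ k ∈ Finset.range M, α (lovVtx M σ (k + 1)) *
          (xev M σ (vertexPt b) k - xev M σ (vertexPt b) (k + 1)))
      = (∑ b, l b * (α (lovVtx M σ 0) * (1 - xev M σ (vertexPt b) 0))) +
        ∑ k ∈ Finset.range M, ∑ b, l b * (α (lovVtx M σ (k + 1)) *
          (xev M σ (vertexPt b) k - xev M σ (vertexPt b) (k + 1))) := by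
    simp only [mul_add, Finset.mul_sum, Finset.sum_add_distrib]
    congr 1
    rw [Finset.sum_comm]
  rw [rhs]
  congr 1
  · rw [hxe 0]
    have h1 : ∀ b ∈ Finset.univ, l b * (α (lovVtx M σ 0) * (1 - xev M σ (vertexPt b) 0))
        = α (lovVtx M σ 0) * l b - α (lovVtx M σ 0) * (l b * xev M σ (vertexPt b) 0) :=
      fun b _ => by ring
    rw [Finset.sum_congr rfl h1, Finset.sum_sub_distrib, ← Finset.mul_sum, ← Finset.mul_sum, hl1]
    ring
  · apply Finset.sum_congr rfl
    intro k _
    rw [hxe k, hxe (k + 1)]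
    have h1 : ∀ b ∈ Finset.univ, l b * (α (lovVtx M σ (k + 1)) *
          (xev M σ (vertexPt b) k - xev M σ (vertexPt b) (k + 1)))
        = α (lovVtx M σ (k + 1)) * (l b * xev M σ (vertexPt b) k)
          - α (lovVtx M σ (k + 1)) * (l b * xev M σ (vertexPt b) (k + 1)) :=
      fun b _ => by ring
    rw [Finset.sum_congr rfl h1, Finset.sum_sub_distrib, ← Finset.mul_sum, ← Finset.mul_sum]
    ring

lemma sorted_mem (M : ℕ) (hM : 0 < M) (α : (Fin M → ℝ) → ℝ) (τ : Equiv.Perm (Fin M))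
    (x : Fin M → ℝ) (hx0 : (0 : Fin M → ℝ) ≤ x) (hx1 : x ≤ 1)
    (hτ : ∀ k l : Fin M, k ≤ l → x (τ l) ≤ x (τ k)) :
    ∃ l : (Fin M → Bool) → ℝ,
      (∀ b, 0 ≤ l b) ∧ (∑ b, l b = 1) ∧
      (∀ i, x i = ∑ b, l b * vertexPt b i) ∧
      lovExpr M α τ x = ∑ b, l b * α (vertexPt b) := by
  classical
  set xe : ℕ → ℝ := xev M τ x with hxe
  set lam : ℕ → ℝ := fun k => if k = 0 then 1 - xe 0 else xe (k - 1) - xe k with hlam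
  set ch : ℕ → (Fin M → Bool) := fun k i => decide ((τ.symm i).1 < k) with hch
  have hchv : ∀ k, vertexPt (ch k) = lovVtx M τ k := by
    intro k
    funext i
    simp [vertexPt, lovVtx, hch]
  have hlam1 : ∀ k, lam (k + 1) = xe k - xe (k + 1) := by
    intro k
    rw [hlam]
    simp only [Nat.succ_ne_zero, if_false, Nat.add_sub_cancel]
  have hxeM : ∀ k, M ≤ k → xe k = 0 := by
    intro k hk
    rw [hxe, xev, dif_neg (by omega)]
  have htrans : ∀ F : (Fin M → Bool) → ℝ,
      (∑ b, (∑ k ∈ Finset.range (M + 1), if ch k = b then lam k else 0) * F b)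
        = ∑ k ∈ Finset.range (M + 1), lam k * F (ch k) := by
    intro F
    simp only [Finset.sum_mul, ite_mul, zero_mul]
    rw [Finset.sum_comm]
    apply Finset.sum_congr rfl
    intro k _
    rw [Finset.sum_ite_eq]
    simp
  have hT : ∀ n, ∑ k ∈ Finset.range (n + 1), lam k = 1 - xe n := by
    intro n
    rw [Finset.sum_range_succ' lam n]
    have h1 : ∀ k ∈ Finset.range n, lam (k + 1) = xe k - xe (k + 1) := fun k _ => hlam1 k
    rw [Finset.sum_congr rfl h1, Finset.sum_range_sub' xe n]
    have h2 : lam 0 = 1 - xe 0 := by simp [hlam]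
    rw [h2]
    ring
  have hlamnn : ∀ k, 0 ≤ lam k := by
    intro k
    rcases Nat.eq_zero_or_pos k with rfl | hk
    · have h0 : lam 0 = 1 - xe 0 := by simp [hlam]
      have h1 : xe 0 ≤ 1 := by
        rw [hxe, xev, dif_pos hM]
        exact hx1 _
      rw [h0]
      linarith
    · obtain ⟨k', rfl⟩ : ∃ k', k = k' + 1 := ⟨k - 1, by omega⟩
      rw [hlam1 k']
      by_cases h2 : k' + 1 < M
      · have hk' : k' < M := by omega
        have h3 : xe k' = x (τ ⟨k', hk'⟩) := by rw [hxe, xev, dif_pos hk']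
        have h4 : xe (k' + 1) = x (τ ⟨k' + 1, h2⟩) := by rw [hxe, xev, dif_pos h2]
        rw [h3, h4]
        have h5 := hτ ⟨k', hk'⟩ ⟨k' + 1, h2⟩ (by simp [Fin.mk_le_mk])
        linarith
      · rw [hxeM (k' + 1) (by omega)]
        by_cases h3 : k' < M
        · rw [hxe, xev, dif_pos h3]
          have := hx0 (τ ⟨k', h3⟩)
          simpa using this
        · rw [hxeM k' (by omega)]
          simp
  refine ⟨fun b => ∑ k ∈ Finset.range (M + 1), if ch k = b then lam k else 0, ?_, ?_, ?_, ?_⟩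
  · -- nonnegativity
    intro b
    apply Finset.sum_nonneg
    intro k _
    split
    · exact hlamnn k
    · exact le_rfl
  · -- sums to one
    have h := htrans (fun _ => 1)
    simp only [mul_one] at h
    rw [h, hT M, hxeM M le_rfl]
    ring
  · -- coordinates
    intro i
    have h := htrans (fun b => vertexPt b i)
    rw [h]
    have h2 : ∀ k ∈ Finset.range (M + 1),
        lam k * vertexPt (ch k) i = lam k * (if ((τ.symm i) : ℕ) < k then 1 else 0) := by
      intro k _
      rw [hchv k, lovVtx]
    rw [Finset.sum_congr rfl h2]
    set j : ℕ := ((τ.symm i) : ℕ) with hj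
    have hjM : j < M := (τ.symm i).isLt
    rw [← Finset.sum_range_add_sum_Ico _ (show j + 1 ≤ M + 1 by omega)]
    have h3 : ∀ k ∈ Finset.range (j + 1), lam k * (if j < k then 1 else 0) = 0 := by
      intro k hk
      rw [if_neg (by simp at hk; omega), mul_zero]
    have h4 : ∀ k ∈ Finset.Ico (j + 1) (M + 1), lam k * (if j < k then 1 else 0) = lam k := by
      intro k hk
      have := Finset.mem_Ico.mp hk
      rw [if_pos (by omega), mul_one]
    rw [Finset.sum_congr rfl h3, Finset.sum_congr rfl h4, Finset.sum_const_zero, zero_add,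
      Finset.sum_Ico_eq_sub _ (show j + 1 ≤ M + 1 by omega), hT M, hT j, hxeM M le_rfl]
    have h5 : xe j = x i := by
      rw [hxe, xev, dif_pos hjM]
      have h6 : (⟨j, hjM⟩ : Fin M) = τ.symm i := by
        apply Fin.ext
        simp [hj]
      rw [h6, Equiv.apply_symm_apply]
    rw [h5]
    ring
  · -- value
    have h := htrans (fun b => α (vertexPt b))
    rw [h, lovExpr_eq]
    have h2 : ∀ k ∈ Finset.range (M + 1), lam k * α (vertexPt (ch k)) = lam k * α (lovVtx M τ k) := by
      intro k _
      rw [hchv k]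
    rw [Finset.sum_congr rfl h2, Finset.sum_range_succ' (fun k => lam k * α (lovVtx M τ k)) M]
    have h3 : ∀ k ∈ Finset.range M,
        lam (k + 1) * α (lovVtx M τ (k + 1)) = α (lovVtx M τ (k + 1)) * (xe k - xe (k + 1)) := by
      intro k _
      rw [hlam1 k, mul_comm]
    rw [Finset.sum_congr rfl h3]
    have h4 : lam 0 * α (lovVtx M τ 0) = α (lovVtx M τ 0) * (1 - xe 0) := by
      have h0 : lam 0 = 1 - xe 0 := by simp [hlam]
      rw [h0, mul_comm]
    rw [h4]
    ring

theorem stmt7 (M : ℕ) (hM : 0 < M) (β0 : ℝ) (β : Fin M → ℝ) (hβ : ∀ m, β m ≤ 0) :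
    ∀ x ∈ Set.Icc (0 : Fin M → ℝ) 1,
      (concEnv (fun z => Real.exp (β0 + ∑ m, β m * z m)) x =
        ⨅ σ : Equiv.Perm (Fin M),
          lovExpr M (fun z => Real.exp (β0 + ∑ m, β m * z m)) σ x) ∧
      (∀ σ : Equiv.Perm (Fin M), (∀ k l : Fin M, k ≤ l → x (σ l) ≤ x (σ k)) →
        concEnv (fun z => Real.exp (β0 + ∑ m, β m * z m)) x =
          lovExpr M (fun z => Real.exp (β0 + ∑ m, β m * z m)) σ x) := by
  intro x hx
  set α : (Fin M → ℝ) → ℝ := fun z => Real.exp (β0 + ∑ m, β m * z m) with hα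
  set S : Set ℝ := { y : ℝ | ∃ l : (Fin M → Bool) → ℝ,
    (∀ b, 0 ≤ l b) ∧ (∑ b, l b = 1) ∧
    (∀ i, x i = ∑ b, l b * vertexPt b i) ∧
    y = ∑ b, l b * α (vertexPt b) } with hS
  have hcE : concEnv α x = sSup S := rfl
  have hub : ∀ σ : Equiv.Perm (Fin M), ∀ y ∈ S, y ≤ lovExpr M α σ x := by
    rintro σ y ⟨l, hl0, hl1, hlx, rfl⟩
    calc ∑ b, l b * α (vertexPt b)
        ≤ ∑ b, l b * lovExpr M α σ (vertexPt b) := by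
          apply Finset.sum_le_sum
          intro b _
          exact mul_le_mul_of_nonneg_left (vertex_le M hM β0 β hβ σ b) (hl0 b)
      _ = lovExpr M α σ x := (lov_affine M α σ l hl1 x hlx).symm
  have hmem : ∀ τ : Equiv.Perm (Fin M), (∀ k l : Fin M, k ≤ l → x (τ l) ≤ x (τ k)) →
      lovExpr M α τ x ∈ S := by
    intro τ hτ
    obtain ⟨l, h1, h2, h3, h4⟩ := sorted_mem M hM α τ x hx.1 hx.2 hτ
    exact ⟨l, h1, h2, h3, h4⟩
  obtain ⟨τ0, hτ0⟩ : ∃ τ : Equiv.Perm (Fin M), ∀ k l : Fin M, k ≤ l → x (τ l) ≤ x (τ k) := by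
    refine ⟨Tuple.sort (fun i => -x i), ?_⟩
    intro k l hkl
    have := Tuple.monotone_sort (fun i => -x i) hkl
    simpa using this
  have hne : S.Nonempty := ⟨_, hmem τ0 hτ0⟩
  have hbdd : BddAbove S := ⟨lovExpr M α 1 x, fun y hy => hub 1 y hy⟩
  have hEq : ∀ τ : Equiv.Perm (Fin M), (∀ k l : Fin M, k ≤ l → x (τ l) ≤ x (τ k)) →
      concEnv α x = lovExpr M α τ x := by
    intro τ hτ
    rw [hcE]
    exact le_antisymm (csSup_le hne (hub τ)) (le_csSup hbdd (hmem τ hτ))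
  constructor
  · apply le_antisymm
    · rw [hcE]
      exact le_ciInf fun σ => csSup_le hne (hub σ)
    · exact (ciInf_le (Set.Finite.bddBelow (Set.finite_range _)) τ0).trans (hEq τ0 hτ0).ge
  · exact fun σ hσ => hEq σ hσ
end

section
/- Let L > M+1 ≥ 2 and let R : {0,1}^N → ℝ be any single-assortment revenue function. For any sequence x¹,...,x^L ∈ {0,1}^N satisfying the cyclic non-overlapping condition (for each product i, the sum of x_i over any M+1 cyclically consecutive periods is at most 1), the average (1/L)Σ_{t=1}^L R(x^t) is at most the maximum over all cyclically non-overlapping sequences y¹,...,y^{M+1} of (1/(M+1))Σ_{t=1}^{M+1} R(y^t). -/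
open Finset

lemma shift_sum_aux (n : ℕ) (f : ℕ → ℝ) :
    ∀ t, (∑ m ∈ Finset.range n, f ((t + m) % n)) = ∑ m ∈ Finset.range n, f (m % n) := by
  intro t
  induction t with
  | zero => simp
  | succ t ih =>
    cases n with
    | zero => simp
    | succ k =>
      rw [← ih]
      have h1 : ∑ m ∈ Finset.range (k + 1), f ((t + 1 + m) % (k + 1)) =
          (∑ m ∈ Finset.range k, f ((t + 1 + m) % (k + 1))) + f ((t + 1 + k) % (k + 1)) :=
        Finset.sum_range_succ _ _
      have h2 : ∑ m ∈ Finset.range (k + 1), f ((t + m) % (k + 1)) =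
          (∑ m ∈ Finset.range k, f ((t + (m + 1)) % (k + 1))) + f ((t + 0) % (k + 1)) :=
        Finset.sum_range_succ' _ _
      rw [h1, h2]
      congr 1
      · exact Finset.sum_congr rfl (fun m _ => by rw [show t + 1 + m = t + (m + 1) by omega])
      · rw [show t + 1 + k = t + (k + 1) by omega, Nat.add_mod_right, Nat.add_zero t]

theorem stmt12 (N M L : ℕ) (hM : 1 ≤ M) (hL : M + 1 < L)
    (R : (Fin N → ℝ) → ℝ)
    (x : ℕ → Fin N → ℝ)
    (hbin : ∀ t i, x t i = 0 ∨ x t i = 1)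
    (hno : ∀ i : Fin N, ∀ t : ℕ,
      ∑ m ∈ Finset.range (M + 1), x ((t + m) % L) i ≤ 1) :
    ∃ y : ℕ → Fin N → ℝ,
      (∀ t i, y t i = 0 ∨ y t i = 1) ∧
      (∀ i : Fin N, ∀ t : ℕ,
        ∑ m ∈ Finset.range (M + 1), y ((t + m) % (M + 1)) i ≤ 1) ∧
      (1 / (L : ℝ)) * ∑ t ∈ Finset.range L, R (x t) ≤
        (1 / ((M : ℝ) + 1)) * ∑ t ∈ Finset.range (M + 1), R (y t) := by
  have hL0 : 0 < L := by omega
  have hLR : (0:ℝ) < L := by exact_mod_cast hL0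
  have hM1 : (0:ℝ) < (M:ℝ) + 1 := by positivity
  set T : ℝ := ∑ t ∈ Finset.range L, R (x t) with hT
  set W : ℕ → ℝ := fun t => ∑ m ∈ Finset.range (M + 1), R (x ((t + m) % L)) with hWdef
  have hsum : ∑ t ∈ Finset.range L, W t = ((M:ℝ) + 1) * T := by
    rw [hWdef]
    simp only
    rw [Finset.sum_comm]
    have hinner : ∀ m : ℕ, ∑ t ∈ Finset.range L, R (x ((t + m) % L)) = T := by
      intro m
      have : ∀ t ∈ Finset.range L, R (x ((t + m) % L)) = (fun s => R (x (s % L))) ((m + t) % L) := by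
        intro t _
        simp only
        rw [Nat.add_comm m t, Nat.mod_mod_of_dvd _ dvd_rfl]
      rw [Finset.sum_congr rfl this, shift_sum_aux L (fun s => R (x (s % L))) m]
      rw [hT]
      apply Finset.sum_congr rfl
      intro t ht
      simp only [Nat.mod_mod_of_dvd _ dvd_rfl]
      rw [Nat.mod_eq_of_lt (Finset.mem_range.mp ht)]
    rw [Finset.sum_congr rfl (fun m _ => hinner m), Finset.sum_const, Finset.card_range,
      nsmul_eq_mul]
    push_cast
    ring
  have hex : ∃ t₀ ∈ Finset.range L, ((M:ℝ) + 1) / L * T ≤ W t₀ := by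
    apply Finset.exists_le_of_sum_le ⟨0, Finset.mem_range.mpr hL0⟩
    rw [hsum, Finset.sum_const, Finset.card_range, nsmul_eq_mul]
    field_simp
    exact le_rfl
  obtain ⟨t₀, _, hW⟩ := hex
  refine ⟨fun t => x ((t₀ + t % (M + 1)) % L), fun t i => hbin _ _, ?_, ?_⟩
  · intro i t
    have key : ∀ m ∈ Finset.range (M + 1),
        x ((t₀ + (t + m) % (M + 1) % (M + 1)) % L) i =
        (fun s => x ((t₀ + s) % L) i) ((t + m) % (M + 1)) := by
      intro m _
      simp [Nat.mod_mod_of_dvd _ dvd_rfl]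
    rw [Finset.sum_congr rfl key, shift_sum_aux (M + 1) (fun s => x ((t₀ + s) % L) i) t]
    have key2 : ∀ m ∈ Finset.range (M + 1),
        (fun s => x ((t₀ + s) % L) i) (m % (M + 1)) = x ((t₀ + m) % L) i := by
      intro m hm
      simp only
      rw [Nat.mod_eq_of_lt (Finset.mem_range.mp hm)]
    rw [Finset.sum_congr rfl key2]
    exact hno i t₀
  · have hWt : ∑ t ∈ Finset.range (M + 1), R (x ((t₀ + t % (M + 1)) % L)) = W t₀ := by
      rw [hWdef]
      apply Finset.sum_congr rfl
      intro t ht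
      rw [Nat.mod_eq_of_lt (Finset.mem_range.mp ht)]
    rw [hWt]
    calc (1 / (L:ℝ)) * T = (1 / ((M:ℝ) + 1)) * (((M:ℝ) + 1) / L * T) := by
          field_simp
      _ ≤ (1 / ((M:ℝ) + 1)) * W t₀ := by
          apply mul_le_mul_of_nonneg_left hW (by positivity)
end

section
/- Let a, C > 0 and k ∈ (0,1). The function h(y) = (a y)/(1 + a y) + (a C − (1−k) a y)/(1 + a C − (1−k) a y) is concave on [0, C] provided 1 + aC − (1−k)aC > 0, and if a = 4(1 − √(1−k)) / (C(3(1−k) + 3√(1−k) − 4)) with k = 1/4 (so a = (16 − 8√3)/(C(6√3 − 7)) > 0), then h attains its unique maximum on [0, C] at y = 3C/4. -/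
open Set

/-- The two-period revenue function `h(y)` of the special HAP instance. -/
noncomputable def hfun (a C k y : ℝ) : ℝ :=
  a * y / (1 + a * y) + (a * C - (1 - k) * a * y) / (1 + a * C - (1 - k) * a * y)

private lemma concaveOn_congr' {s : Set ℝ} {f g : ℝ → ℝ} (h : ConcaveOn ℝ s f)
    (he : Set.EqOn f g s) : ConcaveOn ℝ s g := by
  refine ⟨h.1, fun x hx y hy p q hp hq hpq => ?_⟩
  rw [← he hx, ← he hy, ← he (h.1 hx hy hp hq hpq)]
  exact h.2 hx hy hp hq hpq

set_option maxHeartbeats 1000000 in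
theorem stmt15 (a C k : ℝ) (ha : 0 < a) (hC : 0 < C) (hk : k ∈ Set.Ioo (0 : ℝ) 1)
    (hD : 0 < 1 + a * C - (1 - k) * a * C) :
    ConcaveOn ℝ (Set.Icc 0 C) (hfun a C k) ∧
    (k = 1 / 4 →
      a = (16 - 8 * Real.sqrt 3) / (C * (6 * Real.sqrt 3 - 7)) →
      ∀ y ∈ Set.Icc (0 : ℝ) C, y ≠ 3 * C / 4 →
        hfun a C k y < hfun a C k (3 * C / 4)) := by
  obtain ⟨hk0, hk1⟩ := hk
  have ht0 : 0 < 1 - k := by linarith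
  set H : ℝ → ℝ := fun y => 2 - (1 + a * y)⁻¹ - (1 + a * C - (1 - k) * a * y)⁻¹ with hHdef
  set F : ℝ → ℝ := fun y =>
    a / (1 + a * y) ^ 2 - (1 - k) * a / (1 + a * C - (1 - k) * a * y) ^ 2 with hFdef
  have hu : ∀ y ∈ Icc (0 : ℝ) C, 0 < 1 + a * y := by
    intro y hy; nlinarith [hy.1]
  have hv : ∀ y ∈ Icc (0 : ℝ) C, 0 < 1 + a * C - (1 - k) * a * y := by
    intro y hy; nlinarith [hy.2, mul_pos ht0 ha]
  have heq : Set.EqOn H (hfun a C k) (Icc 0 C) := by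
    intro y hy
    have h1 := hu y hy
    have h2 := hv y hy
    simp only [hfun, hHdef]
    have h1' : (1 + a * y) ≠ 0 := ne_of_gt h1
    have h2' : (1 + a * C - (1 - k) * a * y) ≠ 0 := ne_of_gt h2
    have e1 : a * y / (1 + a * y) = 1 - (1 + a * y)⁻¹ := by
      rw [inv_eq_one_div, one_sub_div h1']; congr 1; ring
    have e2 : (a * C - (1 - k) * a * y) / (1 + a * C - (1 - k) * a * y) =
        1 - (1 + a * C - (1 - k) * a * y)⁻¹ := by
      rw [inv_eq_one_div, one_sub_div h2']; congr 1; ring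
    rw [e1, e2]
    ring
  have hder : ∀ y : ℝ, 0 < 1 + a * y → 0 < 1 + a * C - (1 - k) * a * y →
      HasDerivAt H (F y) y := by
    intro y h1 h2
    have d1 : HasDerivAt (fun y : ℝ => 1 + a * y) a y := by
      simpa using ((hasDerivAt_id y).const_mul a).const_add 1
    have d2 : HasDerivAt (fun y : ℝ => 1 + a * C - (1 - k) * a * y) (-((1 - k) * a)) y := by
      have := ((hasDerivAt_id y).const_mul ((1 - k) * a)).const_sub (1 + a * C)
      simpa [mul_assoc] using this
    have i1 := d1.inv (ne_of_gt h1)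
    have i2 := d2.inv (ne_of_gt h2)
    have h := ((hasDerivAt_const y (2 : ℝ)).sub i1).sub i2
    have hval : (0 : ℝ) - -a / (1 + a * y) ^ 2 -
        -(-((1 - k) * a)) / (1 + a * C - (1 - k) * a * y) ^ 2 = F y := by
      simp only [hFdef]; ring
    rw [hval] at h
    exact h
  have hcont : ContinuousOn H (Icc 0 C) := fun y hy =>
    (hder y (hu y hy) (hv y hy)).continuousAt.continuousWithinAt
  have hderiv : ∀ y ∈ Icc (0 : ℝ) C, deriv H y = F y := fun y hy =>
    (hder y (hu y hy) (hv y hy)).deriv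
  -- strict antitonicity of F on Icc 0 C
  have hanti : StrictAntiOn F (Icc 0 C) := by
    intro y1 h1 y2 h2 h12
    have hu1 := hu y1 h1
    have hu2 := hu y2 h2
    have hv1 := hv y1 h1
    have hv2 := hv y2 h2
    have e1 : a / (1 + a * y2) ^ 2 < a / (1 + a * y1) ^ 2 := by
      apply div_lt_div_of_pos_left ha (by positivity)
      have : 1 + a * y1 < 1 + a * y2 := by nlinarith
      nlinarith
    have e2 : (1 - k) * a / (1 + a * C - (1 - k) * a * y1) ^ 2 <
        (1 - k) * a / (1 + a * C - (1 - k) * a * y2) ^ 2 := by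
      apply div_lt_div_of_pos_left (by positivity) (by positivity)
      have : 1 + a * C - (1 - k) * a * y2 < 1 + a * C - (1 - k) * a * y1 := by
        nlinarith [mul_pos ht0 ha]
      nlinarith
    simp only [hFdef]
    linarith
  have hconc : ConcaveOn ℝ (Icc 0 C) H := by
    refine (StrictAntiOn.strictConcaveOn_of_deriv (convex_Icc 0 C) hcont ?_).concaveOn
    rw [interior_Icc]
    intro x hx y hy hxy
    rw [hderiv x (Ioo_subset_Icc_self hx), hderiv y (Ioo_subset_Icc_self hy)]
    exact hanti (Ioo_subset_Icc_self hx) (Ioo_subset_Icc_self hy) hxy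
  refine ⟨concaveOn_congr' hconc heq, ?_⟩
  -- Part 2
  intro hk4 haeq
  subst hk4
  have s3 : Real.sqrt 3 ^ 2 = 3 := Real.sq_sqrt (by norm_num)
  have s3nn : (0 : ℝ) ≤ Real.sqrt 3 := Real.sqrt_nonneg 3
  have s3lt : Real.sqrt 3 < 2 := by nlinarith
  have s3gt : (1.7 : ℝ) < Real.sqrt 3 := by nlinarith
  have hdenpos : (0 : ℝ) < 6 * Real.sqrt 3 - 7 := by nlinarith
  have hX : a * C * (6 * Real.sqrt 3 - 7) = 16 - 8 * Real.sqrt 3 := by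
    have hCne : C ≠ 0 := ne_of_gt hC
    have hdne : 6 * Real.sqrt 3 - 7 ≠ 0 := ne_of_gt hdenpos
    rw [haeq, mul_assoc, div_mul_cancel₀ _ (mul_ne_zero hCne hdne)]
  set m : ℝ := 3 * C / 4 with hm
  have hm0 : 0 ≤ m := by positivity
  have hmC : m ≤ C := by rw [hm]; linarith
  have hmmem : m ∈ Icc (0 : ℝ) C := ⟨hm0, hmC⟩
  -- the linear function  v - s·u  vanishes at m
  have hLm : 1 + a * C - (1 - 1 / 4) * a * m - Real.sqrt 3 / 2 * (1 + a * m) = 0 := by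
    rw [hm]; linear_combination (-1 / 16 : ℝ) * hX
  -- sign of F
  have hFpos : ∀ y ∈ Ioo (0 : ℝ) m, 0 < F y := by
    intro y hy
    have hyIcc : y ∈ Icc (0 : ℝ) C := ⟨le_of_lt hy.1, le_trans (le_of_lt hy.2) hmC⟩
    have hu0 := hu y hyIcc
    have hv0 := hv y hyIcc
    have hL : Real.sqrt 3 / 2 * (1 + a * y) < 1 + a * C - (1 - 1 / 4) * a * y := by
      nlinarith [mul_pos ha (sub_pos.mpr hy.2)]
    have key := mul_lt_mul'' hL hL (by positivity) (by positivity)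
    have e : Real.sqrt 3 / 2 * (1 + a * y) * (Real.sqrt 3 / 2 * (1 + a * y)) =
        3 / 4 * (1 + a * y) ^ 2 := by linear_combination ((1 + a * y) ^ 2 / 4) * s3
    rw [e] at key
    have hsq : (1 - 1 / 4 : ℝ) * a * (1 + a * y) ^ 2 <
        a * (1 + a * C - (1 - 1 / 4) * a * y) ^ 2 := by
      nlinarith [mul_lt_mul_of_pos_left key ha]
    have : (1 - 1 / 4 : ℝ) * a / (1 + a * C - (1 - 1 / 4) * a * y) ^ 2 <
        a / (1 + a * y) ^ 2 := by
      rw [div_lt_div_iff₀ (by positivity) (by positivity)]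
      nlinarith [hsq]
    simp only [hFdef]
    linarith
  have hFneg : ∀ y ∈ Ioo m C, F y < 0 := by
    intro y hy
    have hyIcc : y ∈ Icc (0 : ℝ) C := ⟨le_trans hm0 (le_of_lt hy.1), le_of_lt hy.2⟩
    have hu0 := hu y hyIcc
    have hv0 := hv y hyIcc
    have hL : 1 + a * C - (1 - 1 / 4) * a * y < Real.sqrt 3 / 2 * (1 + a * y) := by
      nlinarith [mul_pos ha (sub_pos.mpr hy.1)]
    have key := mul_lt_mul'' hL hL (le_of_lt hv0) (le_of_lt hv0)
    have e : Real.sqrt 3 / 2 * (1 + a * y) * (Real.sqrt 3 / 2 * (1 + a * y)) =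
        3 / 4 * (1 + a * y) ^ 2 := by linear_combination ((1 + a * y) ^ 2 / 4) * s3
    rw [e] at key
    have hsq : a * (1 + a * C - (1 - 1 / 4) * a * y) ^ 2 <
        (1 - 1 / 4 : ℝ) * a * (1 + a * y) ^ 2 := by
      nlinarith [mul_lt_mul_of_pos_left key ha]
    have : a / (1 + a * y) ^ 2 <
        (1 - 1 / 4 : ℝ) * a / (1 + a * C - (1 - 1 / 4) * a * y) ^ 2 := by
      rw [div_lt_div_iff₀ (by positivity) (by positivity)]
      nlinarith [hsq]
    simp only [hFdef]
    linarith
  have hmono : StrictMonoOn H (Icc 0 m) := by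
    apply strictMonoOn_of_deriv_pos (convex_Icc 0 m)
      (hcont.mono (Icc_subset_Icc le_rfl hmC))
    rw [interior_Icc]
    intro x hx
    have hxIcc : x ∈ Icc (0 : ℝ) C := ⟨le_of_lt hx.1, le_trans (le_of_lt hx.2) hmC⟩
    rw [hderiv x hxIcc]
    exact hFpos x hx
  have hdecr : StrictAntiOn H (Icc m C) := by
    apply strictAntiOn_of_deriv_neg (convex_Icc m C)
      (hcont.mono (Icc_subset_Icc hm0 le_rfl))
    rw [interior_Icc]
    intro x hx
    have hxIcc : x ∈ Icc (0 : ℝ) C := ⟨le_trans hm0 (le_of_lt hx.1), le_of_lt hx.2⟩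
    rw [hderiv x hxIcc]
    exact hFneg x hx
  intro y hy hyne
  rw [← heq hy, ← heq hmmem]
  rcases lt_or_gt_of_ne hyne with h | h
  · exact hmono ⟨hy.1, le_of_lt h⟩ ⟨hm0, le_rfl⟩ h
  · exact hdecr ⟨le_rfl, hmC⟩ ⟨le_of_lt h, hy.2⟩ h
end

section
/- Under positive history-dependent effects, the sequential revenue-ordered assortments are nested: assume r₁ ≥ ... ≥ r_N ≥ 0, β_i^m ≥ 0 for all i, m, and for each period t let ν^t be the attraction vector determined by the past RO assortments via ν_i^t = exp(β_i⁰ + Σ_{m=1}^M β_i^m · 1[i ∈ [κ^{t−m}]]) (with [κ^s] = ∅ for s ≤ 0), and let [κ^t] be the optimal (largest, in case of ties) revenue-ordered assortment for MNL(·, ν^t). Then κ¹ ≥ κ² ≥ ... ≥ κ^T. -/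
open Finset

/-- Attraction value of product `i` in period `t` induced by the past revenue-ordered
assortments `[κ^{t-1}], …, [κ^{t-M}]` (with `[κ^s] = ∅` for `s ≤ 0`). -/
noncomputable def nuSeq (β0 : ℕ → ℝ) (β : ℕ → ℕ → ℝ) (M : ℕ) (κ : ℕ → ℕ) (t i : ℕ) : ℝ :=
  Real.exp (β0 i + ∑ m ∈ Finset.Icc 1 M,
    (if m < t ∧ 1 ≤ i ∧ i ≤ κ (t - m) then β i m else 0))

lemma nuSeq_pos (β0 : ℕ → ℝ) (β : ℕ → ℕ → ℝ) (M : ℕ) (κ : ℕ → ℕ) (t i : ℕ) :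
    0 < nuSeq β0 β M κ t i := Real.exp_pos _

/-- Monotonicity of MNL in the attraction values, on assortments all of whose
revenues are at least the current value. -/
lemma MNL_mono (r ν ν' : ℕ → ℝ) (S : Finset ℕ)
    (h0 : ∀ i ∈ S, 0 ≤ ν i) (hle : ∀ i ∈ S, ν i ≤ ν' i)
    (hr : ∀ i ∈ S, MNL r ν S ≤ r i) :
    MNL r ν S ≤ MNL r ν' S := by
  have hB : (0:ℝ) < 1 + ∑ i ∈ S, ν i := by
    have := Finset.sum_nonneg h0; linarith
  have hB' : (0:ℝ) < 1 + ∑ i ∈ S, ν' i := by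
    have h1 : ∀ i ∈ S, (0:ℝ) ≤ ν' i := fun i hi => le_trans (h0 i hi) (hle i hi)
    have := Finset.sum_nonneg h1; linarith
  set A := ∑ i ∈ S, r i * ν i with hA
  set B := 1 + ∑ i ∈ S, ν i with hBdef
  set A' := ∑ i ∈ S, r i * ν' i with hA'
  set B' := 1 + ∑ i ∈ S, ν' i with hB'def
  have hterm : ∀ i ∈ S, A * (ν' i - ν i) ≤ (r i * B) * (ν' i - ν i) := by
    intro i hi
    have h1 : A / B ≤ r i := hr i hi
    have h2 : A ≤ r i * B := (div_le_iff₀ hB).mp h1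
    have h3 : 0 ≤ ν' i - ν i := by linarith [hle i hi]
    exact mul_le_mul_of_nonneg_right h2 h3
  have hsum := Finset.sum_le_sum hterm
  have e1 : ∑ i ∈ S, A * (ν' i - ν i) = A * (B' - B) := by
    rw [← Finset.mul_sum]
    congr 1
    rw [Finset.sum_sub_distrib]
    simp [hBdef, hB'def]
  have e2 : ∑ i ∈ S, (r i * B) * (ν' i - ν i) = B * (A' - A) := by
    have : ∀ i ∈ S, (r i * B) * (ν' i - ν i) = B * (r i * ν' i - r i * ν i) := by
      intro i _; ring
    rw [Finset.sum_congr rfl this, ← Finset.mul_sum, Finset.sum_sub_distrib]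
  rw [e1, e2] at hsum
  show A / B ≤ A' / B'
  rw [div_le_div_iff₀ hB hB']
  nlinarith [hsum]

/-- If removing a product from an assortment does not increase the value,
then that product's revenue is at least the value. -/
lemma MNL_le_r_of_erase (r ν : ℕ → ℝ) (S : Finset ℕ) (i : ℕ) (hi : i ∈ S)
    (h0 : ∀ j ∈ S, 0 < ν j)
    (h : MNL r ν (S.erase i) ≤ MNL r ν S) : MNL r ν S ≤ r i := by
  set A := ∑ j ∈ S, r j * ν j with hA
  set B := 1 + ∑ j ∈ S, ν j with hBdef
  have hB : (0:ℝ) < B := by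
    have : (0:ℝ) ≤ ∑ j ∈ S, ν j := Finset.sum_nonneg fun j hj => (h0 j hj).le
    simp [hBdef]; linarith
  have hνi : 0 < ν i := h0 i hi
  have eA : ∑ j ∈ S.erase i, r j * ν j = A - r i * ν i := Finset.sum_erase_eq_sub hi
  have eB : (1:ℝ) + ∑ j ∈ S.erase i, ν j = B - ν i := by
    rw [Finset.sum_erase_eq_sub hi]; simp [hBdef]; ring
  have hB'pos : (0:ℝ) < B - ν i := by
    rw [← eB]
    have : (0:ℝ) ≤ ∑ j ∈ S.erase i, ν j :=
      Finset.sum_nonneg fun j hj => (h0 j (Finset.mem_of_mem_erase hj)).le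
    linarith
  have h' : (A - r i * ν i) / (B - ν i) ≤ A / B := by
    simpa [MNL, eA, eB] using h
  rw [div_le_div_iff₀ hB'pos hB] at h'
  show A / B ≤ r i
  rw [div_le_iff₀ hB]
  nlinarith [h']

/-- If adding a product to an assortment strictly decreases the value,
then that product's revenue is strictly less than the value. -/
lemma r_lt_MNL_of_insert (r ν : ℕ → ℝ) (S : Finset ℕ) (j : ℕ) (hj : j ∉ S)
    (h0 : ∀ i ∈ insert j S, 0 < ν i)
    (h : MNL r ν (insert j S) < MNL r ν S) : r j < MNL r ν S := by
  set A := ∑ i ∈ S, r i * ν i with hA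
  set B := 1 + ∑ i ∈ S, ν i with hBdef
  have hB : (0:ℝ) < B := by
    have : (0:ℝ) ≤ ∑ i ∈ S, ν i :=
      Finset.sum_nonneg fun i hi => (h0 i (Finset.mem_insert_of_mem hi)).le
    simp [hBdef]; linarith
  have hνj : 0 < ν j := h0 j (Finset.mem_insert_self _ _)
  have eA : ∑ i ∈ insert j S, r i * ν i = r j * ν j + A := Finset.sum_insert hj
  have eB : (1:ℝ) + ∑ i ∈ insert j S, ν i = B + ν j := by
    rw [Finset.sum_insert hj]; simp [hBdef]; ring
  have hB' : (0:ℝ) < B + ν j := by linarith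
  have h' : (r j * ν j + A) / (B + ν j) < A / B := by
    simpa [MNL, eA, eB] using h
  rw [div_lt_div_iff₀ hB' hB] at h'
  show r j < A / B
  rw [lt_div_iff₀ hB]
  nlinarith [h']

/-- The attraction values do not decrease from period `u` to `u+1` for products
in the period-`u` assortment, given nestedness of the earlier assortments. -/
lemma nuSeq_mono (β0 : ℕ → ℝ) (β : ℕ → ℕ → ℝ) (M : ℕ) (κ : ℕ → ℕ) (u i : ℕ)
    (hβ : ∀ m ∈ Finset.Icc 1 M, 0 ≤ β i m)
    (hκ : ∀ m, 1 ≤ m → m < u → κ u ≤ κ (u + 1 - m))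
    (hi : i ≤ κ u) :
    nuSeq β0 β M κ u i ≤ nuSeq β0 β M κ (u + 1) i := by
  unfold nuSeq
  apply Real.exp_le_exp.mpr
  apply add_le_add le_rfl
  apply Finset.sum_le_sum
  intro m hm
  by_cases hc : m < u ∧ 1 ≤ i ∧ i ≤ κ (u - m)
  · have hc' : m < u + 1 ∧ 1 ≤ i ∧ i ≤ κ (u + 1 - m) :=
      ⟨by omega, hc.2.1, le_trans hi (hκ m (Finset.mem_Icc.mp hm).1 hc.1)⟩
    rw [if_pos hc, if_pos hc']
  · rw [if_neg hc]
    by_cases hc' : m < u + 1 ∧ 1 ≤ i ∧ i ≤ κ (u + 1 - m)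
    · rw [if_pos hc']; exact hβ m hm
    · rw [if_neg hc']

lemma Icc_one_succ (n : ℕ) : Finset.Icc 1 (n + 1) = insert (n + 1) (Finset.Icc 1 n) := by
  ext x; simp [Finset.mem_Icc, Finset.mem_insert]; omega

theorem stmt17 (N M T : ℕ) (r : ℕ → ℝ) (β0 : ℕ → ℝ) (β : ℕ → ℕ → ℝ)
    (hr_mono : ∀ i j, 1 ≤ i → i ≤ j → j ≤ N → r j ≤ r i)
    (hr_nonneg : ∀ i ∈ Finset.Icc 1 N, 0 ≤ r i)
    (hβ : ∀ i ∈ Finset.Icc 1 N, ∀ m ∈ Finset.Icc 1 M, 0 ≤ β i m)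
    (κ : ℕ → ℕ)
    (hκN : ∀ t ∈ Finset.Icc 1 T, κ t ≤ N)
    (hopt : ∀ t ∈ Finset.Icc 1 T, ∀ S ⊆ Finset.Icc 1 N,
      MNL r (nuSeq β0 β M κ t) S ≤ MNL r (nuSeq β0 β M κ t) (Finset.Icc 1 (κ t)))
    (hmax : ∀ t ∈ Finset.Icc 1 T, ∀ κ', κ' ≤ N →
      MNL r (nuSeq β0 β M κ t) (Finset.Icc 1 κ') =
        MNL r (nuSeq β0 β M κ t) (Finset.Icc 1 (κ t)) → κ' ≤ κ t) :
    ∀ s t : ℕ, 1 ≤ s → s ≤ t → t ≤ T → κ t ≤ κ s := by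
  intro s t
  induction t using Nat.strong_induction_on generalizing s with
  | _ t IH =>
    intro hs hst htT
    rcases eq_or_lt_of_le hst with rfl | hlt
    · exact le_refl _
    · -- s < t, so t ≥ 2; set u = t - 1
      have hstep : κ t ≤ κ (t - 1) := by
        set u := t - 1 with hu
        have hut : u + 1 = t := by omega
        have huT : u ∈ Finset.Icc 1 T := Finset.mem_Icc.mpr ⟨by omega, by omega⟩
        have htT' : t ∈ Finset.Icc 1 T := Finset.mem_Icc.mpr ⟨by omega, htT⟩
        have hκuN : κ u ≤ N := hκN u huT
        have hκtN : κ t ≤ N := hκN t htT'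
        by_contra hcon
        push_neg at hcon
        set j := κ u + 1 with hj
        have hjκt : j ≤ κ t := by omega
        have hjN : j ≤ N := le_trans hjκt hκtN
        set νu := nuSeq β0 β M κ u with hνu
        set νv := nuSeq β0 β M κ t with hνv
        -- (a) r j ≥ V_t
        have ha : MNL r νv (Finset.Icc 1 (κ t)) ≤ r j := by
          apply MNL_le_r_of_erase r νv _ j (Finset.mem_Icc.mpr ⟨by omega, hjκt⟩)
            (fun _ _ => nuSeq_pos _ _ _ _ _ _)
          apply hopt t htT'
          intro x hx
          have := Finset.mem_of_mem_erase hx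
          rw [Finset.mem_Icc] at this ⊢
          omega
        -- (b) r j < V_u
        have hb : r j < MNL r νu (Finset.Icc 1 (κ u)) := by
          have hsub : Finset.Icc 1 j ⊆ Finset.Icc 1 N := by
            intro x hx; rw [Finset.mem_Icc] at hx ⊢; omega
          have h1 : MNL r νu (Finset.Icc 1 j) ≤ MNL r νu (Finset.Icc 1 (κ u)) :=
            hopt u huT _ hsub
          have hne : MNL r νu (Finset.Icc 1 j) ≠ MNL r νu (Finset.Icc 1 (κ u)) := by
            intro heq
            have := hmax u huT j hjN heq
            omega
          have hlt' : MNL r νu (Finset.Icc 1 j) < MNL r νu (Finset.Icc 1 (κ u)) :=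
            lt_of_le_of_ne h1 hne
          have hins : Finset.Icc 1 j = insert j (Finset.Icc 1 (κ u)) := Icc_one_succ (κ u)
          have hjnot : j ∉ Finset.Icc 1 (κ u) := by
            rw [Finset.mem_Icc]; omega
          apply r_lt_MNL_of_insert r νu _ j hjnot (fun _ _ => nuSeq_pos _ _ _ _ _ _)
          rw [← hins]; exact hlt'
        -- (c) V_u ≤ MNL r νv (Icc 1 (κ u))
        have hc : MNL r νu (Finset.Icc 1 (κ u)) ≤ MNL r νv (Finset.Icc 1 (κ u)) := by
          apply MNL_mono
          · exact fun i _ => (nuSeq_pos _ _ _ _ _ _).le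
          · intro i hi
            rw [Finset.mem_Icc] at hi
            have hκmono : ∀ m, 1 ≤ m → m < u → κ u ≤ κ (u + 1 - m) := by
              intro m hm1 hmu
              exact IH u (by omega) (u + 1 - m) (by omega) (by omega) (by omega)
            have := nuSeq_mono β0 β M κ u i
              (hβ i (Finset.mem_Icc.mpr ⟨hi.1, le_trans hi.2 hκuN⟩)) hκmono hi.2
            rwa [hut] at this
          · intro i hi
            apply MNL_le_r_of_erase r νu _ i hi (fun _ _ => nuSeq_pos _ _ _ _ _ _)
            apply hopt u huT
            intro x hx
            have := Finset.mem_of_mem_erase hx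
            rw [Finset.mem_Icc] at this ⊢
            omega
        -- (d)
        have hd : MNL r νv (Finset.Icc 1 (κ u)) ≤ MNL r νv (Finset.Icc 1 (κ t)) := by
          apply hopt t htT'
          intro x hx; rw [Finset.mem_Icc] at hx ⊢; omega
        linarith
      have := IH (t - 1) (by omega) s hs (by omega) (by omega)
      omega
end

section
/- Under nonnegative history-dependent effects and no constraints, the sequential revenue-ordered policy is optimal: the total revenue (1/T)Σ_{t=1}^T MNL(S^t_RO, ν^t_RO) achieved by the sequential RO policy equals the maximum over all assortment sequences (S¹,...,S^T), S^t ⊆ [N], of (1/T)Σ_{t=1}^T MNL(S^t, ν^t), where ν_i^t = exp(β_i⁰ + Σ_{m=1}^M β_i^m · 1[i ∈ S^{t−m}]) with S^s = ∅ for s ≤ 0 and β_i^m ≥ 0 for all i, m. -/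
open Finset

/-- Attraction value `ν_i^t = exp(β_i⁰ + Σ_m β_i^m 1[i ∈ S^{t-m}])` induced by an
assortment sequence `S` (with `S^s = ∅` for `s ≤ 0`). -/
noncomputable def nuOf (β0 : ℕ → ℝ) (β : ℕ → ℕ → ℝ) (M : ℕ) (S : ℕ → Finset ℕ)
    (t i : ℕ) : ℝ :=
  Real.exp (β0 i + ∑ m ∈ Finset.Icc 1 M,
    (if m < t ∧ i ∈ S (t - m) then β i m else 0))

private lemma denom_pos (ν : ℕ → ℝ) (hν : ∀ i, 0 < ν i) (A : Finset ℕ) :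
    0 < 1 + ∑ i ∈ A, ν i := by
  have : 0 ≤ ∑ i ∈ A, ν i := Finset.sum_nonneg fun i _ => (hν i).le
  linarith

/-- Removing an item whose revenue is below the current value strictly improves the value. -/
private lemma mnl_erase (r ν : ℕ → ℝ) (hν : ∀ i, 0 < ν i) (A : Finset ℕ) (i : ℕ)
    (hiA : i ∈ A) (hlt : r i < MNL r ν A) : MNL r ν A < MNL r ν (A.erase i) := by
  have hb : 0 < 1 + ∑ j ∈ A, ν j := denom_pos ν hν A
  have hb' : 0 < 1 + ∑ j ∈ A.erase i, ν j := denom_pos ν hν _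
  have hs1 : ∑ j ∈ A, ν j = ν i + ∑ j ∈ A.erase i, ν j := (Finset.add_sum_erase A ν hiA).symm
  have hs2 : ∑ j ∈ A, r j * ν j = r i * ν i + ∑ j ∈ A.erase i, r j * ν j :=
    (Finset.add_sum_erase A (fun j => r j * ν j) hiA).symm
  rw [MNL, lt_div_iff₀ hb] at hlt
  rw [MNL, MNL, div_lt_div_iff₀ hb hb']
  rw [hs1, hs2] at hlt ⊢
  have key : r i * (1 + ∑ j ∈ A.erase i, ν j) < ∑ j ∈ A.erase i, r j * ν j := by
    nlinarith [hν i]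
  nlinarith [mul_pos (hν i) (sub_pos.mpr key)]

/-- Core comparison lemma: the value of any assortment under attractions `ν ≤ ν'` is at most
the value, under `ν'`, of the set of all products with revenue above that value. -/
private lemma mnl_core (N : ℕ) (r ν ν' : ℕ → ℝ)
    (hν : ∀ i, 0 < ν i) (hν' : ∀ i, 0 < ν' i)
    (hle : ∀ i ∈ Finset.Icc 1 N, ν i ≤ ν' i)
    (A : Finset ℕ) (hA : A ⊆ Finset.Icc 1 N) :
    MNL r ν A ≤ MNL r ν' ((Finset.Icc 1 N).filter (fun i => MNL r ν A ≤ r i)) := by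
  set θ := MNL r ν A with hθ
  have hbA : 0 < 1 + ∑ i ∈ A, ν i := denom_pos ν hν A
  have heq : θ * (1 + ∑ i ∈ A, ν i) = ∑ i ∈ A, r i * ν i := by
    rw [hθ]
    simp only [MNL]
    rw [div_mul_cancel₀ _ (ne_of_gt hbA)]
  have hkey : ∑ i ∈ A, ν i * (r i - θ) = θ := by
    have h1 : ∑ i ∈ A, ν i * (r i - θ) =
        (∑ i ∈ A, r i * ν i) - θ * ∑ i ∈ A, ν i := by
      rw [Finset.mul_sum, ← Finset.sum_sub_distrib]
      exact Finset.sum_congr rfl fun i _ => by ring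
    linear_combination h1 - heq
  have hfsub : A.filter (fun i => θ ≤ r i) ⊆ (Finset.Icc 1 N).filter (fun i => θ ≤ r i) :=
    fun i hi => Finset.mem_filter.mpr
      ⟨hA (Finset.mem_filter.mp hi).1, (Finset.mem_filter.mp hi).2⟩
  have h2 : ∑ i ∈ A, ν i * (r i - θ) ≤ ∑ i ∈ A.filter (fun i => θ ≤ r i), ν i * (r i - θ) := by
    have hsplit := Finset.sum_filter_add_sum_filter_not A (fun i => θ ≤ r i)
      (fun i => ν i * (r i - θ))
    have hneg : ∑ i ∈ A.filter (fun i => ¬ θ ≤ r i), ν i * (r i - θ) ≤ 0 :=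
      Finset.sum_nonpos fun i hi => by
        have h := (Finset.mem_filter.mp hi).2
        push_neg at h
        exact mul_nonpos_of_nonneg_of_nonpos (hν i).le (by linarith)
    linarith
  have h3 : ∑ i ∈ A.filter (fun i => θ ≤ r i), ν i * (r i - θ)
      ≤ ∑ i ∈ A.filter (fun i => θ ≤ r i), ν' i * (r i - θ) := by
    refine Finset.sum_le_sum fun i hi => ?_
    have h := (Finset.mem_filter.mp hi).2
    exact mul_le_mul_of_nonneg_right (hle i (hA (Finset.mem_filter.mp hi).1)) (by linarith)
  have h4 : ∑ i ∈ A.filter (fun i => θ ≤ r i), ν' i * (r i - θ)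
      ≤ ∑ i ∈ (Finset.Icc 1 N).filter (fun i => θ ≤ r i), ν' i * (r i - θ) := by
    refine Finset.sum_le_sum_of_subset_of_nonneg hfsub fun i hi _ => ?_
    have h := (Finset.mem_filter.mp hi).2
    exact mul_nonneg (hν' i).le (by linarith)
  have hbD : 0 < 1 + ∑ i ∈ (Finset.Icc 1 N).filter (fun i => θ ≤ r i), ν' i :=
    denom_pos ν' hν' _
  simp only [MNL]
  rw [le_div_iff₀ hbD]
  have h6 : ∑ i ∈ (Finset.Icc 1 N).filter (fun i => θ ≤ r i), ν' i * (r i - θ)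
      = (∑ i ∈ (Finset.Icc 1 N).filter (fun i => θ ≤ r i), r i * ν' i)
        - θ * ∑ i ∈ (Finset.Icc 1 N).filter (fun i => θ ≤ r i), ν' i := by
    rw [Finset.mul_sum, ← Finset.sum_sub_distrib]
    exact Finset.sum_congr rfl fun i _ => by ring
  nlinarith [hkey, h2, h3, h4, h6]

/-- The optimal single-period MNL value over all subsets of `[1, N]`. -/
private noncomputable def Vstar (N : ℕ) (r ν : ℕ → ℝ) : ℝ :=
  ((Finset.Icc 1 N).powerset).sup' ⟨∅, Finset.empty_mem_powerset _⟩ (fun A => MNL r ν A)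

private lemma le_Vstar (N : ℕ) (r ν : ℕ → ℝ) (A : Finset ℕ) (hA : A ⊆ Finset.Icc 1 N) :
    MNL r ν A ≤ Vstar N r ν :=
  Finset.le_sup' _ (Finset.mem_powerset.mpr hA)

private lemma key_le (N : ℕ) (r ν ν' : ℕ → ℝ) (hν : ∀ i, 0 < ν i) (hν' : ∀ i, 0 < ν' i)
    (hle : ∀ i ∈ Finset.Icc 1 N, ν i ≤ ν' i) (A : Finset ℕ) (hA : A ⊆ Finset.Icc 1 N) :
    MNL r ν A ≤ Vstar N r ν' :=
  le_trans (mnl_core N r ν ν' hν hν' hle A hA) (le_Vstar N r ν' _ (Finset.filter_subset _ _))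

private lemma Vstar_mono (N : ℕ) (r ν ν' : ℕ → ℝ) (hν : ∀ i, 0 < ν i) (hν' : ∀ i, 0 < ν' i)
    (hle : ∀ i ∈ Finset.Icc 1 N, ν i ≤ ν' i) : Vstar N r ν ≤ Vstar N r ν' :=
  Finset.sup'_le _ _ fun A hA => key_le N r ν ν' hν hν' hle A (Finset.mem_powerset.mp hA)

private lemma Vstar_eq_filter (N : ℕ) (r ν : ℕ → ℝ) (hν : ∀ i, 0 < ν i) :
    MNL r ν ((Finset.Icc 1 N).filter (fun i => Vstar N r ν ≤ r i)) = Vstar N r ν := by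
  apply le_antisymm (le_Vstar N r ν _ (Finset.filter_subset _ _))
  obtain ⟨A, hAmem, hAeq⟩ :=
    Finset.exists_mem_eq_sup'
      (⟨∅, Finset.empty_mem_powerset _⟩ : ((Finset.Icc 1 N).powerset).Nonempty)
      (fun A => MNL r ν A)
  have hV : Vstar N r ν = MNL r ν A := hAeq
  have h := mnl_core N r ν ν hν hν (fun i _ => le_refl _) A (Finset.mem_powerset.mp hAmem)
  rw [hV]
  exact h

/-- A revenue-threshold set is revenue-ordered: it equals `Icc 1 k` for `k` its cardinality. -/
private lemma filter_eq_Icc (N : ℕ) (r : ℕ → ℝ)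
    (hr : ∀ i j, 1 ≤ i → i ≤ j → j ≤ N → r j ≤ r i) (θ : ℝ) :
    (Finset.Icc 1 N).filter (fun i => θ ≤ r i)
      = Finset.Icc 1 ((Finset.Icc 1 N).filter (fun i => θ ≤ r i)).card := by
  set F := (Finset.Icc 1 N).filter (fun i => θ ≤ r i) with hF
  apply Finset.eq_of_subset_of_card_le
  · intro i hi
    have hiI := Finset.mem_Icc.mp (Finset.mem_filter.mp hi).1
    have hri := (Finset.mem_filter.mp hi).2
    have hsub : Finset.Icc 1 i ⊆ F := by
      intro j hj
      have hjI := Finset.mem_Icc.mp hj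
      exact Finset.mem_filter.mpr ⟨Finset.mem_Icc.mpr ⟨hjI.1, le_trans hjI.2 hiI.2⟩,
        le_trans hri (hr j i hjI.1 hjI.2 hiI.2)⟩
    have hcard := Finset.card_le_card hsub
    rw [Nat.card_Icc] at hcard
    exact Finset.mem_Icc.mpr ⟨hiI.1, by omega⟩
  · rw [Nat.card_Icc]
    omega

private lemma nuOf_le_nubar (β0 : ℕ → ℝ) (β : ℕ → ℕ → ℝ) (M N : ℕ)
    (hβ : ∀ i ∈ Finset.Icc 1 N, ∀ m ∈ Finset.Icc 1 M, 0 ≤ β i m)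
    (S : ℕ → Finset ℕ) (t i : ℕ) (hi : i ∈ Finset.Icc 1 N) :
    nuOf β0 β M S t i ≤ nuOf β0 β M (fun _ => Finset.Icc 1 N) t i := by
  unfold nuOf
  apply Real.exp_le_exp.mpr
  apply add_le_add_right
  refine Finset.sum_le_sum fun m hm => ?_
  by_cases h : m < t ∧ i ∈ S (t - m)
  · rw [if_pos h, if_pos ⟨h.1, hi⟩]
  · rw [if_neg h]
    split_ifs with h2
    · exact hβ i hi m hm
    · exact le_refl 0

private lemma nubar_mono (β0 : ℕ → ℝ) (β : ℕ → ℕ → ℝ) (M N : ℕ)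
    (hβ : ∀ i ∈ Finset.Icc 1 N, ∀ m ∈ Finset.Icc 1 M, 0 ≤ β i m)
    (s t : ℕ) (hst : s ≤ t) (i : ℕ) (hi : i ∈ Finset.Icc 1 N) :
    nuOf β0 β M (fun _ => Finset.Icc 1 N) s i ≤ nuOf β0 β M (fun _ => Finset.Icc 1 N) t i := by
  unfold nuOf
  apply Real.exp_le_exp.mpr
  apply add_le_add_right
  refine Finset.sum_le_sum fun m hm => ?_
  by_cases h : m < s ∧ i ∈ Finset.Icc 1 N
  · rw [if_pos h, if_pos ⟨lt_of_lt_of_le h.1 hst, h.2⟩]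
  · rw [if_neg h]
    split_ifs with h2
    · exact hβ i hi m hm
    · exact le_refl 0

/-- The per-period upper bound: optimal value with all memory effects switched on. -/
private noncomputable def VV (N : ℕ) (r β0 : ℕ → ℝ) (β : ℕ → ℕ → ℝ) (M t : ℕ) : ℝ :=
  Vstar N r (nuOf β0 β M (fun _ => Finset.Icc 1 N) t)

/-- The corresponding revenue-ordered threshold index. -/
private noncomputable def kk (N : ℕ) (r β0 : ℕ → ℝ) (β : ℕ → ℕ → ℝ) (M t : ℕ) : ℕ :=
  ((Finset.Icc 1 N).filter (fun i => VV N r β0 β M t ≤ r i)).card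

theorem stmt18 (N M T : ℕ) (hT : 1 ≤ T) (r : ℕ → ℝ) (β0 : ℕ → ℝ) (β : ℕ → ℕ → ℝ)
    (hr_mono : ∀ i j, 1 ≤ i → i ≤ j → j ≤ N → r j ≤ r i)
    (hr_nonneg : ∀ i ∈ Finset.Icc 1 N, 0 ≤ r i)
    (hβ : ∀ i ∈ Finset.Icc 1 N, ∀ m ∈ Finset.Icc 1 M, 0 ≤ β i m)
    (κ : ℕ → ℕ)
    (hκN : ∀ t ∈ Finset.Icc 1 T, κ t ≤ N)
    -- In each period the sequential policy picks the best (revenue-ordered) assortment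
    -- for the attraction values induced by its own past choices ...
    (hopt : ∀ t ∈ Finset.Icc 1 T, ∀ S ⊆ Finset.Icc 1 N,
      MNL r (nuOf β0 β M (fun s => Finset.Icc 1 (κ s)) t) S ≤
        MNL r (nuOf β0 β M (fun s => Finset.Icc 1 (κ s)) t) (Finset.Icc 1 (κ t)))
    -- ... choosing the largest revenue-ordered maximizer in case of ties.
    (hmax : ∀ t ∈ Finset.Icc 1 T, ∀ κ', κ' ≤ N →
      MNL r (nuOf β0 β M (fun s => Finset.Icc 1 (κ s)) t) (Finset.Icc 1 κ') =
        MNL r (nuOf β0 β M (fun s => Finset.Icc 1 (κ s)) t) (Finset.Icc 1 (κ t)) →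
      κ' ≤ κ t) :
    (1 / (T : ℝ)) * ∑ t ∈ Finset.Icc 1 T,
        MNL r (nuOf β0 β M (fun s => Finset.Icc 1 (κ s)) t) (Finset.Icc 1 (κ t)) =
      sSup { v : ℝ | ∃ S : ℕ → Finset ℕ,
        (∀ t ∈ Finset.Icc 1 T, S t ⊆ Finset.Icc 1 N) ∧
        v = (1 / (T : ℝ)) * ∑ t ∈ Finset.Icc 1 T, MNL r (nuOf β0 β M S t) (S t) } := by
  have hνpos : ∀ (S : ℕ → Finset ℕ) (t i : ℕ), 0 < nuOf β0 β M S t i :=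
    fun S t i => Real.exp_pos _
  -- kk ≤ N
  have hkN : ∀ t, kk N r β0 β M t ≤ N := by
    intro t
    have h := Finset.card_le_card
      (Finset.filter_subset (fun i => VV N r β0 β M t ≤ r i) (Finset.Icc 1 N))
    rw [Nat.card_Icc] at h
    unfold kk
    omega
  -- VV monotone in t
  have hVmono : ∀ s t : ℕ, s ≤ t → VV N r β0 β M s ≤ VV N r β0 β M t := fun s t hst =>
    Vstar_mono N r _ _ (fun i => Real.exp_pos _) (fun i => Real.exp_pos _)
      (fun i hi => nubar_mono β0 β M N hβ s t hst i hi)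
  -- kk antitone in t
  have hkanti : ∀ s t : ℕ, s ≤ t → kk N r β0 β M t ≤ kk N r β0 β M s := by
    intro s t hst
    unfold kk
    apply Finset.card_le_card
    intro i hi
    have h := Finset.mem_filter.mp hi
    exact Finset.mem_filter.mpr ⟨h.1, le_trans (hVmono s t hst) h.2⟩
  -- threshold set is revenue ordered
  have hfilter : ∀ t, (Finset.Icc 1 N).filter (fun i => VV N r β0 β M t ≤ r i)
      = Finset.Icc 1 (kk N r β0 β M t) := fun t => filter_eq_Icc N r hr_mono _
  -- main induction: the RO policy uses exactly the threshold index, achieving VV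
  have main : ∀ t, t ∈ Finset.Icc 1 T →
      κ t = kk N r β0 β M t ∧
      MNL r (nuOf β0 β M (fun s => Finset.Icc 1 (κ s)) t) (Finset.Icc 1 (κ t))
        = VV N r β0 β M t := by
    intro t
    induction t using Nat.strong_induction_on with
    | _ t IH =>
      intro ht
      obtain ⟨ht1, htT⟩ := Finset.mem_Icc.mp ht
      -- Step A: on the threshold set, the RO attractions equal the maximal attractions
      have stepA : ∀ i ∈ Finset.Icc 1 (kk N r β0 β M t),
          nuOf β0 β M (fun s => Finset.Icc 1 (κ s)) t i
            = nuOf β0 β M (fun _ => Finset.Icc 1 N) t i := by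
        intro i hi
        obtain ⟨hi1, hik⟩ := Finset.mem_Icc.mp hi
        have hsums : ∑ m ∈ Finset.Icc 1 M,
              (if m < t ∧ i ∈ Finset.Icc 1 (κ (t - m)) then β i m else 0)
            = ∑ m ∈ Finset.Icc 1 M,
              (if m < t ∧ i ∈ Finset.Icc 1 N then β i m else 0) := by
          refine Finset.sum_congr rfl fun m hm => ?_
          have hm1 := (Finset.mem_Icc.mp hm).1
          by_cases hmt : m < t
          · have htm : t - m ∈ Finset.Icc 1 T := Finset.mem_Icc.mpr ⟨by omega, by omega⟩
            have hIH := IH (t - m) (by omega) htm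
            have hκtm : kk N r β0 β M t ≤ κ (t - m) := by
              rw [hIH.1]
              exact hkanti (t - m) t (by omega)
            rw [if_pos ⟨hmt, Finset.mem_Icc.mpr ⟨hi1, by omega⟩⟩,
                if_pos ⟨hmt, Finset.mem_Icc.mpr ⟨hi1, le_trans hik (hkN t)⟩⟩]
          · rw [if_neg (fun h => hmt h.1), if_neg (fun h => hmt h.1)]
        unfold nuOf
        rw [hsums]
      -- Step B: the RO value on the threshold set equals VV
      have stepB : MNL r (nuOf β0 β M (fun s => Finset.Icc 1 (κ s)) t)
          (Finset.Icc 1 (kk N r β0 β M t)) = VV N r β0 β M t := by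
        have h1 : MNL r (nuOf β0 β M (fun s => Finset.Icc 1 (κ s)) t)
            (Finset.Icc 1 (kk N r β0 β M t))
            = MNL r (nuOf β0 β M (fun _ => Finset.Icc 1 N) t)
              (Finset.Icc 1 (kk N r β0 β M t)) := by
          have e1 : ∑ i ∈ Finset.Icc 1 (kk N r β0 β M t),
                r i * nuOf β0 β M (fun s => Finset.Icc 1 (κ s)) t i
              = ∑ i ∈ Finset.Icc 1 (kk N r β0 β M t),
                r i * nuOf β0 β M (fun _ => Finset.Icc 1 N) t i :=
            Finset.sum_congr rfl fun i hi => by rw [stepA i hi]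
          have e2 : ∑ i ∈ Finset.Icc 1 (kk N r β0 β M t),
                nuOf β0 β M (fun s => Finset.Icc 1 (κ s)) t i
              = ∑ i ∈ Finset.Icc 1 (kk N r β0 β M t),
                nuOf β0 β M (fun _ => Finset.Icc 1 N) t i :=
            Finset.sum_congr rfl fun i hi => stepA i hi
          unfold MNL
          rw [e1, e2]
        rw [h1, ← hfilter t]
        exact Vstar_eq_filter N r _ (fun i => Real.exp_pos _)
      have hROle : ∀ i ∈ Finset.Icc 1 N,
          nuOf β0 β M (fun s => Finset.Icc 1 (κ s)) t i
            ≤ nuOf β0 β M (fun _ => Finset.Icc 1 N) t i :=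
        fun i hi => nuOf_le_nubar β0 β M N hβ _ t i hi
      -- Step C: the RO value equals VV
      have hCle : MNL r (nuOf β0 β M (fun s => Finset.Icc 1 (κ s)) t) (Finset.Icc 1 (κ t))
          ≤ VV N r β0 β M t :=
        key_le N r _ _ (hνpos _ t) (hνpos _ t) hROle _
          (Finset.Icc_subset_Icc_right (hκN t ht))
      have hCge : VV N r β0 β M t
          ≤ MNL r (nuOf β0 β M (fun s => Finset.Icc 1 (κ s)) t) (Finset.Icc 1 (κ t)) := by
        rw [← stepB]
        exact hopt t ht _ (Finset.Icc_subset_Icc_right (hkN t))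
      have hθ : MNL r (nuOf β0 β M (fun s => Finset.Icc 1 (κ s)) t) (Finset.Icc 1 (κ t))
          = VV N r β0 β M t := le_antisymm hCle hCge
      refine ⟨le_antisymm ?_ (hmax t ht _ (hkN t) (stepB.trans hθ.symm)), hθ⟩
      -- κ t ≤ kk t
      rcases Nat.eq_zero_or_pos (κ t) with h0 | hpos
      · omega
      · have hmem : κ t ∈ (Finset.Icc 1 N).filter (fun i => VV N r β0 β M t ≤ r i) := by
          refine Finset.mem_filter.mpr ⟨Finset.mem_Icc.mpr ⟨hpos, hκN t ht⟩, ?_⟩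
          by_contra hcon
          push_neg at hcon
          have hself : κ t ∈ Finset.Icc 1 (κ t) := Finset.mem_Icc.mpr ⟨hpos, le_refl _⟩
          have hstrict := mnl_erase r _ (hνpos _ t) _ (κ t) hself (by rw [hθ]; exact hcon)
          have hsub : (Finset.Icc 1 (κ t)).erase (κ t) ⊆ Finset.Icc 1 N :=
            Finset.Subset.trans (Finset.erase_subset _ _)
              (Finset.Icc_subset_Icc_right (hκN t ht))
          have hle2 := hopt t ht _ hsub
          linarith
        rw [hfilter t] at hmem
        exact (Finset.mem_Icc.mp hmem).2
  -- wrap up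
  have hROmem : (1 / (T : ℝ)) * ∑ t ∈ Finset.Icc 1 T,
      MNL r (nuOf β0 β M (fun s => Finset.Icc 1 (κ s)) t) (Finset.Icc 1 (κ t)) ∈
      { v : ℝ | ∃ S : ℕ → Finset ℕ,
        (∀ t ∈ Finset.Icc 1 T, S t ⊆ Finset.Icc 1 N) ∧
        v = (1 / (T : ℝ)) * ∑ t ∈ Finset.Icc 1 T, MNL r (nuOf β0 β M S t) (S t) } :=
    ⟨fun s => Finset.Icc 1 (κ s),
      fun t ht => Finset.Icc_subset_Icc_right (hκN t ht), rfl⟩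
  have hub : ∀ v ∈ { v : ℝ | ∃ S : ℕ → Finset ℕ,
        (∀ t ∈ Finset.Icc 1 T, S t ⊆ Finset.Icc 1 N) ∧
        v = (1 / (T : ℝ)) * ∑ t ∈ Finset.Icc 1 T, MNL r (nuOf β0 β M S t) (S t) },
      v ≤ (1 / (T : ℝ)) * ∑ t ∈ Finset.Icc 1 T,
        MNL r (nuOf β0 β M (fun s => Finset.Icc 1 (κ s)) t) (Finset.Icc 1 (κ t)) := by
    rintro v ⟨S, hS, rfl⟩
    apply mul_le_mul_of_nonneg_left _ (by positivity)
    refine Finset.sum_le_sum fun t ht => ?_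
    have h1 : MNL r (nuOf β0 β M S t) (S t) ≤ VV N r β0 β M t :=
      key_le N r _ _ (hνpos S t) (hνpos _ t)
        (fun i hi => nuOf_le_nubar β0 β M N hβ S t i hi) (S t) (hS t ht)
    rw [(main t ht).2]
    exact h1
  exact le_antisymm (le_csSup ⟨_, hub⟩ hROmem) (csSup_le ⟨_, hROmem⟩ hub)
end

section
/- For any optimal solution of the unconstrained history-dependent assortment problem, there exists an optimal solution (S¹,...,S^T) such that the union ∪_{t=1}^T S^t of products ever offered is revenue-ordered: with r₁ ≥ ... ≥ r_N, if j ∈ ∪_t S^t and i < j, then there is an optimal solution in which i ∈ ∪_t S^t. -/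
open Finset

lemma nuOf_pos (β0 : ℕ → ℝ) (β : ℕ → ℕ → ℝ) (M : ℕ) (S : ℕ → Finset ℕ) (t k : ℕ) :
    0 < nuOf β0 β M S t k := Real.exp_pos _

lemma nuOf_congr (β0 : ℕ → ℝ) (β : ℕ → ℕ → ℝ) (M : ℕ) (S S' : ℕ → Finset ℕ)
    (t k : ℕ) (h : ∀ m ∈ Finset.Icc 1 M, m < t → (k ∈ S (t - m) ↔ k ∈ S' (t - m))) :
    nuOf β0 β M S t k = nuOf β0 β M S' t k := by
  unfold nuOf
  have hs : (∑ m ∈ Finset.Icc 1 M, (if m < t ∧ k ∈ S (t - m) then β k m else 0)) =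
      (∑ m ∈ Finset.Icc 1 M, (if m < t ∧ k ∈ S' (t - m) then β k m else 0)) := by
    apply Finset.sum_congr rfl
    intro m hm
    by_cases hmt : m < t
    · simp only [hmt, true_and]
      rw [if_congr (h m hm hmt) rfl rfl]
    · simp [hmt]
  rw [hs]

lemma MNL_congr (r ν ν' : ℕ → ℝ) (S : Finset ℕ) (h : ∀ k ∈ S, ν k = ν' k) :
    MNL r ν S = MNL r ν' S := by
  unfold MNL
  rw [Finset.sum_congr rfl fun k hk => by rw [h k hk],
      Finset.sum_congr rfl fun k hk => h k hk]

lemma mnl_le_insert (r ν : ℕ → ℝ) (S : Finset ℕ) (i : ℕ) (hi : i ∉ S)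
    (hν : ∀ k, 0 < ν k) (h : MNL r ν S ≤ r i) :
    MNL r ν S ≤ MNL r ν (insert i S) := by
  have hB : (0:ℝ) ≤ ∑ k ∈ S, ν k := Finset.sum_nonneg fun k _ => (hν k).le
  have hd1 : (0:ℝ) < 1 + ∑ k ∈ S, ν k := by linarith
  unfold MNL at *
  rw [Finset.sum_insert hi, Finset.sum_insert hi]
  have hd2 : (0:ℝ) < 1 + (ν i + ∑ k ∈ S, ν k) := by have := hν i; linarith
  rw [div_le_div_iff₀ hd1 hd2]
  have hA : (∑ k ∈ S, r k * ν k) ≤ r i * (1 + ∑ k ∈ S, ν k) :=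
    (div_le_iff₀ hd1).mp h
  nlinarith [mul_le_mul_of_nonneg_right hA (hν i).le]

lemma mnl_erase_lt (r ν : ℕ → ℝ) (S : Finset ℕ) (j : ℕ) (hj : j ∈ S)
    (hν : ∀ k, 0 < ν k) (h : r j < MNL r ν S) :
    MNL r ν S < MNL r ν (S.erase j) := by
  have hje : j ∉ S.erase j := Finset.notMem_erase j S
  have hins : insert j (S.erase j) = S := Finset.insert_erase hj
  rw [← hins] at h ⊢
  rw [Finset.erase_insert hje]
  have hB : (0:ℝ) ≤ ∑ k ∈ S.erase j, ν k := Finset.sum_nonneg fun k _ => (hν k).le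
  have hd1 : (0:ℝ) < 1 + ∑ k ∈ S.erase j, ν k := by linarith
  unfold MNL at *
  rw [Finset.sum_insert hje, Finset.sum_insert hje] at h ⊢
  have hd2 : (0:ℝ) < 1 + (ν j + ∑ k ∈ S.erase j, ν k) := by have := hν j; linarith
  rw [lt_div_iff₀ hd2] at h
  rw [div_lt_div_iff₀ hd2 hd1]
  nlinarith [mul_le_mul_of_nonneg_right h.le (hν j).le, hν j]

theorem stmt19 (N M T : ℕ) (hT : 1 ≤ T) (r : ℕ → ℝ) (β0 : ℕ → ℝ) (β : ℕ → ℕ → ℝ)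
    (hr_mono : ∀ i j, 1 ≤ i → i ≤ j → j ≤ N → r j ≤ r i)
    (hr_nonneg : ∀ i ∈ Finset.Icc 1 N, 0 ≤ r i) :
    ∃ S : ℕ → Finset ℕ,
      (∀ t ∈ Finset.Icc 1 T, S t ⊆ Finset.Icc 1 N) ∧
      (∀ S' : ℕ → Finset ℕ, (∀ t ∈ Finset.Icc 1 T, S' t ⊆ Finset.Icc 1 N) →
        (1 / (T : ℝ)) * ∑ t ∈ Finset.Icc 1 T, MNL r (nuOf β0 β M S' t) (S' t) ≤
          (1 / (T : ℝ)) * ∑ t ∈ Finset.Icc 1 T, MNL r (nuOf β0 β M S t) (S t)) ∧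
      (∀ i j : ℕ, 1 ≤ i → i ≤ j → j ≤ N →
        j ∈ (Finset.Icc 1 T).biUnion S → i ∈ (Finset.Icc 1 T).biUnion S) := by
  classical
  set obj : (ℕ → Finset ℕ) → ℝ :=
    fun S => ∑ t ∈ Finset.Icc 1 T, MNL r (nuOf β0 β M S t) (S t) with hobj
  -- the objective only depends on the values of S on [1, T]
  have objcongr : ∀ S S' : ℕ → Finset ℕ, (∀ t ∈ Finset.Icc 1 T, S t = S' t) →
      obj S = obj S' := by
    intro S S' h
    apply Finset.sum_congr rfl
    intro t ht
    rw [h t ht]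
    apply MNL_congr
    intro k _
    apply nuOf_congr
    intro m hm hmt
    rw [h (t - m) (by simp only [Finset.mem_Icc] at ht hm ⊢; omega)]
  -- the finite set of canonical solutions
  set D : Finset (ℕ → Finset ℕ) :=
    ((Finset.Icc 1 T).pi (fun _ => (Finset.Icc 1 N).powerset)).image
      (fun g t => if h : t ∈ Finset.Icc 1 T then g t h else ∅) with hD
  have memD : ∀ S : ℕ → Finset ℕ,
      (∀ t, S t ⊆ Finset.Icc 1 N) → (∀ t, t ∉ Finset.Icc 1 T → S t = ∅) → S ∈ D := by
    intro S h1 h2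
    refine Finset.mem_image.mpr ⟨fun t _ => S t, ?_, ?_⟩
    · rw [Finset.mem_pi]; intro t ht; exact Finset.mem_powerset.mpr (h1 t)
    · funext t
      by_cases ht : t ∈ Finset.Icc 1 T
      · simp [ht]
      · simp [ht, h2 t ht]
  have memD' : ∀ S ∈ D,
      (∀ t, S t ⊆ Finset.Icc 1 N) ∧ (∀ t, t ∉ Finset.Icc 1 T → S t = ∅) := by
    intro S hS
    obtain ⟨g, hg, rfl⟩ := Finset.mem_image.mp hS
    rw [Finset.mem_pi] at hg
    constructor
    · intro t
      by_cases ht : t ∈ Finset.Icc 1 T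
      · simpa [ht] using Finset.mem_powerset.mp (hg t ht)
      · simp [ht]
    · intro t ht; simp [ht]
  have hDne : D.Nonempty :=
    ⟨_, memD (fun _ => ∅) (fun _ => by simp) (fun _ _ => rfl)⟩
  obtain ⟨S0, hS0D, hS0max⟩ := Finset.exists_max_image D obj hDne
  set D2 : Finset (ℕ → Finset ℕ) := D.filter (fun S => obj S = obj S0) with hD2
  have hD2ne : D2.Nonempty := ⟨S0, Finset.mem_filter.mpr ⟨hS0D, rfl⟩⟩
  obtain ⟨Sm, hSmD2, hSmmax⟩ :=
    Finset.exists_max_image D2 (fun S => ((Finset.Icc 1 T).biUnion S).card) hD2ne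
  obtain ⟨hSmD, hSmobj⟩ := Finset.mem_filter.mp hSmD2
  obtain ⟨hsub, hempty⟩ := memD' Sm hSmD
  refine ⟨Sm, fun t _ => hsub t, ?_, ?_⟩
  · -- optimality
    intro S' hS'
    apply mul_le_mul_of_nonneg_left _ (by positivity)
    set SR : ℕ → Finset ℕ := fun t => if t ∈ Finset.Icc 1 T then S' t else ∅ with hSR
    have hSRt : ∀ t, SR t = if t ∈ Finset.Icc 1 T then S' t else ∅ := fun t => rfl
    have hSRD : SR ∈ D := by
      apply memD
      · intro t
        by_cases ht : t ∈ Finset.Icc 1 T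
        · rw [hSRt t, if_pos ht]; exact hS' t ht
        · rw [hSRt t, if_neg ht]; exact Finset.empty_subset _
      · intro t ht; rw [hSRt t, if_neg ht]
    have h1 : obj S' = obj SR := objcongr _ _ (fun t ht => by rw [hSRt t, if_pos ht])
    calc obj S' = obj SR := h1
      _ ≤ obj S0 := hS0max SR hSRD
      _ = obj Sm := hSmobj.symm
  · -- revenue-ordered union
    intro i j hi hij hjN hj
    by_contra hiU
    have hiN : i ∈ Finset.Icc 1 N := Finset.mem_Icc.mpr ⟨hi, le_trans hij hjN⟩
    have hiAll : ∀ t, i ∉ Sm t := by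
      intro t hit
      by_cases ht : t ∈ Finset.Icc 1 T
      · exact hiU (Finset.mem_biUnion.mpr ⟨t, ht, hit⟩)
      · rw [hempty t ht] at hit; exact absurd hit (Finset.notMem_empty i)
    by_cases hcase : ∃ τ ∈ Finset.Icc 1 T, MNL r (nuOf β0 β M Sm τ) (Sm τ) ≤ r i
    · -- we can add i to period τ, keeping optimality but enlarging the union
      obtain ⟨τ, hτ, hle⟩ := hcase
      set S1 : ℕ → Finset ℕ := Function.update Sm τ (insert i (Sm τ)) with hS1
      have hS1τ : S1 τ = insert i (Sm τ) := Function.update_self τ _ Sm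
      have hS1t : ∀ t, t ≠ τ → S1 t = Sm t := fun t ht => Function.update_of_ne ht _ Sm
      have hS1D : S1 ∈ D := by
        apply memD
        · intro t
          by_cases htτ : t = τ
          · subst htτ; rw [hS1τ]
            exact Finset.insert_subset hiN (hsub t)
          · rw [hS1t t htτ]; exact hsub t
        · intro t ht
          have htτ : t ≠ τ := by rintro rfl; exact ht hτ
          rw [hS1t t htτ]; exact hempty t ht
      have hnu1 : ∀ t k, k ≠ i → nuOf β0 β M S1 t k = nuOf β0 β M Sm t k := by
        intro t k hk
        apply nuOf_congr
        intro m _ _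
        by_cases hs : t - m = τ
        · rw [hs, hS1τ, Finset.mem_insert]
          simp [hk]
        · rw [hS1t _ hs]
      have hnuτ : ∀ k, nuOf β0 β M S1 τ k = nuOf β0 β M Sm τ k := by
        intro k
        apply nuOf_congr
        intro m hm hmt
        have hne : τ - m ≠ τ := by simp only [Finset.mem_Icc] at hm; omega
        rw [hS1t _ hne]
      have hSmS1 : obj Sm ≤ obj S1 := by
        apply Finset.sum_le_sum
        intro t ht
        by_cases htτ : t = τ
        · subst htτ
          rw [hS1τ]
          rw [MNL_congr r (nuOf β0 β M S1 t) (nuOf β0 β M Sm t) (insert i (Sm t))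
            (fun k _ => hnuτ k)]
          exact mnl_le_insert r _ (Sm t) i (hiAll t) (fun k => nuOf_pos _ _ _ _ _ _) hle
        · rw [hS1t t htτ]
          rw [MNL_congr r (nuOf β0 β M S1 t) (nuOf β0 β M Sm t) (Sm t)
            (fun k hk => hnu1 t k (fun hki => hiAll t (hki ▸ hk)))]
      have hS1D2 : S1 ∈ D2 := Finset.mem_filter.mpr ⟨hS1D,
        le_antisymm (hS0max S1 hS1D) (le_trans (le_of_eq hSmobj.symm) hSmS1)⟩
      have hsubset : (Finset.Icc 1 T).biUnion Sm ⊆ (Finset.Icc 1 T).biUnion S1 := by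
        intro x hx
        obtain ⟨t, ht, hxt⟩ := Finset.mem_biUnion.mp hx
        refine Finset.mem_biUnion.mpr ⟨t, ht, ?_⟩
        by_cases htτ : t = τ
        · subst htτ; rw [hS1τ]; exact Finset.mem_insert_of_mem hxt
        · rw [hS1t t htτ]; exact hxt
      have hiS1 : i ∈ (Finset.Icc 1 T).biUnion S1 :=
        Finset.mem_biUnion.mpr ⟨τ, hτ, by rw [hS1τ]; exact Finset.mem_insert_self i _⟩
      have hss : (Finset.Icc 1 T).biUnion Sm ⊂ (Finset.Icc 1 T).biUnion S1 :=
        (Finset.ssubset_iff_of_subset hsubset).mpr ⟨i, hiS1, hiU⟩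
      exact absurd (hSmmax S1 hS1D2) (not_le.mpr (Finset.card_lt_card hss))
    · push_neg at hcase
      set F : Finset ℕ := (Finset.Icc 1 T).filter (fun t => j ∈ Sm t) with hF
      have hFne : F.Nonempty := by
        obtain ⟨t, ht, hjt⟩ := Finset.mem_biUnion.mp hj
        exact ⟨t, Finset.mem_filter.mpr ⟨ht, hjt⟩⟩
      set τ := F.max' hFne with hτdef
      have hτF := F.max'_mem hFne
      obtain ⟨hτ, hjτ⟩ := Finset.mem_filter.mp hτF
      have hmaxτ : ∀ t ∈ Finset.Icc 1 T, j ∈ Sm t → t ≤ τ :=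
        fun t ht hjt => F.le_max' t (Finset.mem_filter.mpr ⟨ht, hjt⟩)
      set S2 : ℕ → Finset ℕ := Function.update Sm τ ((Sm τ).erase j) with hS2
      have hS2τ : S2 τ = (Sm τ).erase j := Function.update_self τ _ Sm
      have hS2t : ∀ t, t ≠ τ → S2 t = Sm t := fun t ht => Function.update_of_ne ht _ Sm
      have hS2D : S2 ∈ D := by
        apply memD
        · intro t
          by_cases htτ : t = τ
          · subst htτ; rw [hS2τ]
            exact (Finset.erase_subset _ _).trans (hsub _)
          · rw [hS2t t htτ]; exact hsub t
        · intro t ht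
          have htτ : t ≠ τ := by rintro rfl; exact ht hτ
          rw [hS2t t htτ]; exact hempty t ht
      have hnuτ2 : ∀ k, nuOf β0 β M S2 τ k = nuOf β0 β M Sm τ k := by
        intro k; apply nuOf_congr; intro m hm hmt
        have hne : τ - m ≠ τ := by simp only [Finset.mem_Icc] at hm; omega
        rw [hS2t _ hne]
      have heq : ∀ t, t ∈ Finset.Icc 1 T → t ≠ τ →
          MNL r (nuOf β0 β M Sm t) (Sm t) = MNL r (nuOf β0 β M S2 t) (S2 t) := by
        intro t ht htτ
        rw [hS2t t htτ]
        apply MNL_congr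
        intro k hk
        apply nuOf_congr
        intro m hm hmt
        by_cases hs : t - m = τ
        · have hτlt' : τ < t := by simp only [Finset.mem_Icc] at hm; omega
          have hkj : k ≠ j := by
            rintro rfl
            exact absurd (hmaxτ t ht hk) (by omega)
          rw [hs, hS2τ, Finset.mem_erase]
          simp [hkj]
        · rw [hS2t _ hs]
      have hτlt : MNL r (nuOf β0 β M Sm τ) (Sm τ) < MNL r (nuOf β0 β M S2 τ) (S2 τ) := by
        rw [hS2τ]
        rw [MNL_congr r (nuOf β0 β M S2 τ) (nuOf β0 β M Sm τ) ((Sm τ).erase j)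
          (fun k _ => hnuτ2 k)]
        exact mnl_erase_lt r _ (Sm τ) j hjτ (fun k => nuOf_pos _ _ _ _ _ _)
          (lt_of_le_of_lt (hr_mono i j hi hij hjN) (hcase τ hτ))
      have hstrict : obj Sm < obj S2 := by
        apply Finset.sum_lt_sum
        · intro t ht
          by_cases htτ : t = τ
          · subst htτ; exact hτlt.le
          · exact (heq t ht htτ).le
        · exact ⟨τ, hτ, hτlt⟩
      have := hS0max S2 hS2D
      rw [← hSmobj] at this
      exact absurd this (not_le.mpr hstrict)
end
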